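/- arXiv:2212.06753 — 5 statements merged into one kernel-verified Lean document; each statement's English description precedes it below -/
import Mathlib

section
/- Let n be a positive integer and p_1, …, p_n distinct prime numbers. If (X, r) is an indecomposable multipermutation involutive non-degenerate set-theoretic solution of the Yang–Baxter equation of cardinality p_1⋯p_n, then the multipermutation level of (X, r) is at most n; moreover, the solution (𝒢(X,r), r_𝒢) associated to the natural left brace 𝒢(X,r) also has multipermutation level at most n. -/
open Equiv Pointwise

universe u v

/-- An involutive non-degenerate set-theoretic solution of the Yang–Baxter equation on `X`,
presented by its family of bijections `σ x` (`x ∈ X`), subject to the condition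
`σ_x ∘ σ_{σ_x⁻¹(y)} = σ_y ∘ σ_{σ_y⁻¹(x)}`; the solution itself is recovered as
`r (x, y) = (σ x y, (σ (σ x y))⁻¹ x)`. -/
structure YBE (X : Type u) where
  σ : X → Equiv.Perm X
  ybe : ∀ x y : X, σ x * σ ((σ x)⁻¹ y) = σ y * σ ((σ y)⁻¹ x)

namespace YBE

variable {X : Type u} {Y : Type v}

/-- The permutation group `𝒢(X,r)` of a solution. -/
def permGroup (S : YBE X) : Subgroup (Equiv.Perm X) :=
  Subgroup.closure (Set.range S.σ)

/-- `(X,r)` is indecomposable if `𝒢(X,r)` acts transitively on `X`. -/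
def Indecomposable (S : YBE X) : Prop :=
  ∀ x y : X, ∃ g ∈ S.permGroup, g x = y

/-- Homomorphism of solutions. -/
def IsHom (S : YBE X) (T : YBE Y) (f : X → Y) : Prop :=
  ∀ x y : X, f (S.σ x y) = T.σ (f x) (f y)

/-- `T` is (a copy of) the retract `Ret(X,r)` of `S`: there is a surjective homomorphism
of solutions identifying points with equal `σ`'s, and only those. -/
def IsRetract (S : YBE X) (T : YBE Y) : Prop :=
  ∃ f : X → Y, Function.Surjective f ∧ S.IsHom T f ∧
    ∀ x x' : X, f x = f x' ↔ S.σ x = S.σ x'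

/-- `Retⁿ(X,r)` has cardinality one, i.e. the multipermutation level is at most `n`. -/
def MPLevelLE : ℕ → (X : Type u) → YBE X → Prop
  | 0, X, _ => Nonempty X ∧ Subsingleton X
  | n + 1, _, S => ∃ (Z : Type u) (T : YBE Z), S.IsRetract T ∧ MPLevelLE n Z T

/-- `(X,r)` is a multipermutation solution: `Retⁿ(X,r)` has cardinality one
for some positive integer `n`. -/
def IsMultipermutation (S : YBE X) : Prop :=
  ∃ n : ℕ, 0 < n ∧ MPLevelLE n X S

/-- `m` is the multipermutation level of `(X,r)`: it is the least positive integer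
with `|Retᵐ(X,r)| = 1`. -/
def MPLevelExact (S : YBE X) (m : ℕ) : Prop :=
  0 < m ∧ MPLevelLE m X S ∧ ∀ k : ℕ, 0 < k → MPLevelLE k X S → m ≤ k

/-- A simple solution: `|X| > 1` and every epimorphic image is either an isomorphic copy
or a singleton. -/
def IsSimple (S : YBE X) : Prop :=
  1 < Nat.card X ∧ ∀ (Z : Type u) (T : YBE Z) (f : X → Z),
    S.IsHom T f → Function.Surjective f → (Function.Bijective f ∨ Nat.card Z = 1)

end YBE

/-- The orbit `H(x) = {t(x) : t ∈ H}` of `x ∈ X` under a subgroup `H` of a permutation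
group `G ≤ Sym(X)`. -/
def orbIn {X : Type u} {G : Subgroup (Equiv.Perm X)} (H : Subgroup ↥G) (x : X) : Set X :=
  {y | ∃ t : ↥G, t ∈ H ∧ (t : Equiv.Perm X) x = y}

/-- The "orbit" `A(x) = {t(x) : t ∈ A}` of `x ∈ X` under a subset `A` of a permutation
group `G ≤ Sym(X)`. -/
def orbSet {X : Type u} {G : Subgroup (Equiv.Perm X)} (A : Set ↥G) (x : X) : Set X :=
  {y | ∃ t ∈ A, ((t : Equiv.Perm X)) x = y}

/-- A left-brace structure on a group `G`: an abelian group operation `add` (whose neutral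
element is `1`) satisfying the brace compatibility `a∘(b+c) + a = a∘b + a∘c`, where `∘` is the
given group operation of `G`.  In other words, this makes `G` a left brace whose
multiplicative group is `G`. -/
structure BraceOps (G : Type*) [Group G] where
  add : G → G → G
  neg : G → G
  add_assoc : ∀ a b c, add (add a b) c = add a (add b c)
  add_comm : ∀ a b, add a b = add b a
  zero_add : ∀ a, add 1 a = a
  neg_add_cancel : ∀ a, add (neg a) a = 1
  compat : ∀ a b c, add (a * add b c) a = add (a * b) (a * c)

namespace BraceOps

variable {G : Type*} [Group G]

/-- The lambda map `λ_a(b) = -a + a∘b` of a left brace. -/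
def lam (β : BraceOps G) (a b : G) : G :=
  β.add (β.neg a) (a * b)

/-- Natural multiples with respect to the additive structure of the brace. -/
def nsmul (β : BraceOps G) : ℕ → G → G
  | 0, _ => 1
  | n + 1, a => β.add a (β.nsmul n a)

/-- The socle `Soc(B) = {a : a∘b = a + b for all b}` of a left brace. -/
def socle (β : BraceOps G) : Set G :=
  {a | ∀ b : G, a * b = β.add a b}

/-- The Sylow `q`-subgroup (i.e. the `q`-primary component) of the additive group of a
finite left brace. -/
def addSylow (β : BraceOps G) (q : ℕ) : Set G :=
  {a | ∃ k : ℕ, β.nsmul (q ^ k) a = 1}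

/-- `A` is a subgroup of the additive group of the brace. -/
def IsAddSubgroup (β : BraceOps G) (A : Set G) : Prop :=
  1 ∈ A ∧ (∀ a ∈ A, ∀ b ∈ A, β.add a b ∈ A) ∧ ∀ a ∈ A, β.neg a ∈ A

/-- A left ideal of a left brace: an additive subgroup stable under all `λ_a`. -/
def IsLeftIdeal (β : BraceOps G) (L : Set G) : Prop :=
  β.IsAddSubgroup L ∧ ∀ a : G, ∀ b ∈ L, β.lam a b ∈ L

/-- An ideal of a left brace: a normal subgroup of the multiplicative group stable
under all `λ_a`. -/
def IsIdeal (β : BraceOps G) (I : Set G) : Prop :=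
  1 ∈ I ∧ (∀ a ∈ I, ∀ b ∈ I, a * b ∈ I) ∧ (∀ a ∈ I, a⁻¹ ∈ I) ∧
    (∀ g : G, ∀ a ∈ I, g * a * g⁻¹ ∈ I) ∧ ∀ g : G, ∀ a ∈ I, β.lam g a ∈ I

end BraceOps

namespace YBE

variable {X : Type u}

/-- `σ x` as an element of `𝒢(X,r)`. -/
def σg (S : YBE X) (x : X) : ↥S.permGroup :=
  ⟨S.σ x, Subgroup.subset_closure (Set.mem_range_self x)⟩

/-- The natural left-brace structure on `𝒢(X,r)`: the unique left brace structure whose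
multiplicative group is `𝒢(X,r)`, whose additive group is generated by `{σ_x : x ∈ X}`,
and whose lambda map satisfies `λ_g(σ_y) = σ_{g(y)}`. -/
structure IsNaturalBrace (S : YBE X) (β : BraceOps ↥S.permGroup) : Prop where
  lam_sigma : ∀ (g : ↥S.permGroup) (y : X),
    β.lam g (S.σg y) = S.σg ((g : Equiv.Perm X) y)
  add_gen : ∀ A : Set ↥S.permGroup, β.IsAddSubgroup A → (∀ x : X, S.σg x ∈ A) →
    ∀ g : ↥S.permGroup, g ∈ A

/-- The product `P_{τ(1)} P_{τ(2)} ⋯ P_{τ(i)}` of Sylow subgroups of the additive group of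
the left brace `𝒢(X,r)`, taken inside the multiplicative group. -/
def sylProdTake (S : YBE X) (β : BraceOps ↥S.permGroup) {n : ℕ} (p : Fin n → ℕ)
    (τ : Equiv.Perm (Fin n)) (i : ℕ) : Set ↥S.permGroup :=
  ((List.ofFn fun j : Fin n => β.addSylow (p (τ j))).take i).prod

/-- The product `P_{i+1} P_{i+2} ⋯ P_n` of Sylow subgroups of the additive group of the
left brace `𝒢(X,r)`, taken inside the multiplicative group. -/
def sylProdDrop (S : YBE X) (β : BraceOps ↥S.permGroup) {n : ℕ} (p : Fin n → ℕ)
    (i : ℕ) : Set ↥S.permGroup :=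
  ((List.ofFn fun j : Fin n => β.addSylow (p j)).drop i).prod

end YBE

/-- The holomorph `ℤ/(q) ⋊ Aut(ℤ/(q))` of the cyclic group of order `q`. -/
abbrev Hol (q : ℕ) :=
  SemidirectProduct (Multiplicative (ZMod q)) (MulAut (Multiplicative (ZMod q)))
    (MonoidHom.id (MulAut (Multiplicative (ZMod q))))

/-- Kronecker delta `δ_{u,w} ∈ ℤ/(q)`. -/
noncomputable def kdelta (q : ℕ) {α : Type v} (u w : α) : ZMod q :=
  letI := Classical.propDecidable (u = w)
  if u = w then 1 else 0

/-- The map `σ'_{(a,x)}(b,y) = (b + δ_{x,σ_x(y)}, σ_x(y))` on `ℤ/(q) × Y`. -/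
noncomputable def extMap {Y : Type v} (T : YBE Y) (q : ℕ) (a b : ZMod q × Y) :
    ZMod q × Y :=
  (b.1 + kdelta q a.2 (T.σ a.2 b.2), T.σ a.2 b.2)


/-! ### Auxiliary development -/

section Aux
namespace BraceOps
variable {G : Type*} [Group G]

def toAddCommGroup (β : BraceOps G) : AddCommGroup G := by
  letI : Zero G := ⟨1⟩
  letI : Add G := ⟨β.add⟩
  letI : Neg G := ⟨β.neg⟩
  exact { add_assoc := β.add_assoc, zero_add := β.zero_add,
          add_zero := fun a => (β.add_comm a 1).trans (β.zero_add a),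
          add_comm := β.add_comm, neg_add_cancel := β.neg_add_cancel,
          nsmul := nsmulRec, zsmul := zsmulRec }

section
variable (β : BraceOps G)

theorem mul_add' (a b c : G) : a * β.add b c = β.add (β.add (a * b) (a * c)) (β.neg a) := by
  letI := β.toAddCommGroup
  have h : a * (b + c) + a = a * b + a * c := β.compat a b c
  show a * (b + c) = a * b + a * c + -a
  rw [← h]; abel

theorem mul_eq (a b : G) : a * b = β.add a (β.lam a b) := by
  letI := β.toAddCommGroup
  show a * b = a + (-a + a * b); abel

theorem lam_add (a b c : G) : β.lam a (β.add b c) = β.add (β.lam a b) (β.lam a c) := by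
  letI := β.toAddCommGroup
  show -a + a * (b + c) = (-a + a * b) + (-a + a * c)
  rw [show a * (b + c) = a * b + a * c + -a from β.mul_add' a b c]
  abel

theorem lam_zero (a : G) : β.lam a 1 = 1 := by
  letI := β.toAddCommGroup
  show -a + a * 1 = (0 : G)
  rw [mul_one]; abel

theorem mul_neg' (a b : G) : a * β.neg b = β.add (β.add a a) (β.neg (a * b)) := by
  letI := β.toAddCommGroup
  have h : a * (b + -b) = a * b + a * (-b) + -a := β.mul_add' a b (-b)
  rw [show b + -b = (0:G) from by abel, show a * (0:G) = a from mul_one a] at h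
  show a * -b = a + a + -(a * b)
  rw [← sub_eq_zero] at h ⊢
  calc a * -b - (a + a + -(a * b)) = -(a - (a * b + a * -b + -a)) := by abel
    _ = 0 := by rw [h]; abel

theorem lam_neg (a b : G) : β.lam a (β.neg b) = β.neg (β.lam a b) := by
  letI := β.toAddCommGroup
  show -a + a * -b = -(-a + a * b)
  rw [show a * -b = a + a + -(a * b) from β.mul_neg' a b]
  abel

theorem lam_mul (a b c : G) : β.lam (a * b) c = β.lam a (β.lam b c) := by
  letI := β.toAddCommGroup
  show -(a * b) + (a * b) * c = -a + a * (-b + b * c)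
  rw [show a * (-b + b * c) = a * -b + a * (b * c) + -a from β.mul_add' a (-b) (b * c),
      show a * -b = a + a + -(a * b) from β.mul_neg' a b, ← mul_assoc]
  abel

theorem lam_one_left (c : G) : β.lam 1 c = c := by
  letI := β.toAddCommGroup
  show -(0:G) + 1 * c = c
  rw [one_mul]; abel

theorem lam_lam_inv (a c : G) : β.lam a (β.lam a⁻¹ c) = c := by
  rw [← β.lam_mul, mul_inv_cancel, β.lam_one_left]

theorem lam_inv_lam (a c : G) : β.lam a⁻¹ (β.lam a c) = c := by
  rw [← β.lam_mul, inv_mul_cancel, β.lam_one_left]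

/-- The socle predicate. -/
def InSoc (β : BraceOps G) (a : G) : Prop := ∀ b, β.lam a b = b

theorem insoc_mul {a b : G} (ha : β.InSoc a) (hb : β.InSoc b) : β.InSoc (a * b) := by
  intro c; rw [β.lam_mul, hb, ha]

theorem insoc_one : β.InSoc 1 := β.lam_one_left

theorem insoc_inv {a : G} (ha : β.InSoc a) : β.InSoc a⁻¹ := by
  intro c
  have := β.lam_lam_inv a c
  rw [ha] at this
  exact this

theorem insoc_conj {a : G} (g : G) (ha : β.InSoc a) : β.InSoc (g * a * g⁻¹) := by
  intro c; rw [β.lam_mul, β.lam_mul, ha, β.lam_lam_inv]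

theorem insoc_mul_eq_add {a : G} (ha : β.InSoc a) (b : G) : a * b = β.add a b := by
  rw [β.mul_eq a b, ha]

theorem insoc_add {a b : G} (ha : β.InSoc a) (hb : β.InSoc b) : β.InSoc (β.add a b) := by
  rw [← β.insoc_mul_eq_add ha]; exact β.insoc_mul ha hb

theorem insoc_neg_eq_inv {a : G} (ha : β.InSoc a) : β.neg a = a⁻¹ := by
  letI := β.toAddCommGroup
  have h : a * a⁻¹ = a + a⁻¹ := β.insoc_mul_eq_add ha a⁻¹
  rw [mul_inv_cancel] at h
  have : (0:G) = a + a⁻¹ := h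
  show -a = a⁻¹
  rw [← sub_eq_zero] at this ⊢
  rw [show -a - a⁻¹ = 0 - (a + a⁻¹) from by abel, this]

theorem insoc_neg {a : G} (ha : β.InSoc a) : β.InSoc (β.neg a) := by
  rw [β.insoc_neg_eq_inv ha]; exact β.insoc_inv ha

theorem lam_insoc_eq_conj {s : G} (hs : β.InSoc s) (a : G) : β.lam a s = a * s * a⁻¹ := by
  letI := β.toAddCommGroup
  have h1 : (a * s * a⁻¹) * a = (a * s * a⁻¹) + a :=
    β.insoc_mul_eq_add (β.insoc_conj a hs) a
  have h2 : a * s = a + β.lam a s := β.mul_eq a s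
  rw [inv_mul_cancel_right] at h1
  have h3 : a * s * a⁻¹ + a = a + β.lam a s := h1.symm.trans h2
  show β.lam a s = a * s * a⁻¹
  rw [← sub_eq_zero] at h3 ⊢
  rw [show β.lam a s - a * s * a⁻¹ = -(a * s * a⁻¹ + a - (a + β.lam a s)) from by abel, h3, neg_zero]

theorem insoc_lam {s : G} (hs : β.InSoc s) (a : G) : β.InSoc (β.lam a s) := by
  rw [β.lam_insoc_eq_conj hs]; exact β.insoc_conj a hs

theorem insoc_of_lam_eq {a b : G} (h : ∀ c, β.lam a c = β.lam b c) : β.InSoc (a⁻¹ * b) := by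
  intro c; rw [β.lam_mul, ← h, β.lam_inv_lam]

theorem lam_eq_of_insoc {a b : G} (h : β.InSoc (a⁻¹ * b)) (c : G) : β.lam a c = β.lam b c := by
  have : β.lam a (β.lam (a⁻¹ * b) c) = β.lam a c := by rw [h]
  rw [← this, ← β.lam_mul, mul_inv_cancel_left]

end
end BraceOps

namespace SF
open YBE
variable {G : Type u} [Group G]

/-- `lam a` as a permutation. -/
def lamPerm (β : BraceOps G) (a : G) : Equiv.Perm G :=
  ⟨β.lam a, β.lam a⁻¹, β.lam_inv_lam a, β.lam_lam_inv a⟩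

theorem mul_lam_inv (β : BraceOps G) (a b : G) : a * β.lam a⁻¹ b = β.add a b := by
  rw [β.mul_eq a (β.lam a⁻¹ b), β.lam_lam_inv]

/-- The solution associated to a left brace. -/
def braceYBE (β : BraceOps G) : YBE G where
  σ a := lamPerm β a
  ybe a b := by
    apply Equiv.ext
    intro c
    show β.lam a (β.lam ((lamPerm β a)⁻¹ b) c) = β.lam b (β.lam ((lamPerm β b)⁻¹ a) c)
    have h1 : ((lamPerm β a)⁻¹ : Equiv.Perm G) b = β.lam a⁻¹ b := rfl
    have h2 : ((lamPerm β b)⁻¹ : Equiv.Perm G) a = β.lam b⁻¹ a := rfl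
    rw [h1, h2, ← β.lam_mul, ← β.lam_mul, mul_lam_inv, mul_lam_inv, β.add_comm]

@[simp] theorem braceYBE_σ (β : BraceOps G) (a b : G) : (braceYBE β).σ a b = β.lam a b := rfl

variable {X : Type u}


def retSetoid (S : YBE X) : Setoid X :=
  ⟨fun x y => S.σ x = S.σ y, ⟨fun _ => rfl, Eq.symm, Eq.trans⟩⟩

abbrev RetX (S : YBE X) : Type u := Quotient (retSetoid S)

def rmk (S : YBE X) (x : X) : RetX S := Quotient.mk (retSetoid S) x

theorem rmk_surjective (S : YBE X) : Function.Surjective (rmk S) :=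
  fun q => Quotient.exists_rep q

variable (S : YBE X) (β : BraceOps ↥S.permGroup) (hβ : S.IsNaturalBrace β)

include hβ

theorem sig_g (g : ↥S.permGroup) {u v : X} (h : S.σ u = S.σ v) :
    S.σ ((g : Equiv.Perm X) u) = S.σ ((g : Equiv.Perm X) v) := by
  have h1 : S.σg u = S.σg v := Subtype.ext h
  have h2 := hβ.lam_sigma g u
  rw [h1, hβ.lam_sigma g v] at h2
  exact congrArg Subtype.val h2.symm

/-- The permutation of the retract induced by `g ∈ 𝒢(X,r)`. -/
def qperm (g : ↥S.permGroup) : Equiv.Perm (RetX S) where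
  toFun := Quotient.map (g : Equiv.Perm X) (fun _ _ h => sig_g S β hβ g h)
  invFun := Quotient.map ((g⁻¹ : ↥S.permGroup) : Equiv.Perm X)
    (fun _ _ h => sig_g S β hβ g⁻¹ h)
  left_inv := by
    rintro ⟨x⟩
    show Quotient.mk _ (((g : Equiv.Perm X))⁻¹ ((g : Equiv.Perm X) x)) = Quotient.mk _ x
    simp
  right_inv := by
    rintro ⟨x⟩
    show Quotient.mk _ (((g : Equiv.Perm X)) (((g : Equiv.Perm X))⁻¹ x)) = Quotient.mk _ x
    simp

theorem qperm_mk (g : ↥S.permGroup) (x : X) :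
    qperm S β hβ g (rmk S x) = rmk S ((g : Equiv.Perm X) x) := rfl

/-- The induced group homomorphism `𝒢(X,r) → Sym(Ret(X,r))`. -/
def ψ : ↥S.permGroup →* Equiv.Perm (RetX S) where
  toFun := qperm S β hβ
  map_one' := by
    apply Equiv.ext; rintro ⟨x⟩; rfl
  map_mul' g h := by
    apply Equiv.ext; rintro ⟨x⟩; rfl

theorem ψ_mk (g : ↥S.permGroup) (x : X) :
    ψ S β hβ g (rmk S x) = rmk S ((g : Equiv.Perm X) x) := rfl

/-- The sigma map of the retract solution. -/
def retσ : RetX S → Equiv.Perm (RetX S) :=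
  Quotient.lift (fun x => ψ S β hβ (S.σg x))
    (fun a b h => by
      show ψ S β hβ (S.σg a) = ψ S β hβ (S.σg b)
      rw [show S.σg a = S.σg b from Subtype.ext h])

theorem retσ_mk (x : X) : retσ S β hβ (rmk S x) = ψ S β hβ (S.σg x) := rfl

/-- The retract solution. -/
def retYBE : YBE (RetX S) where
  σ := retσ S β hβ
  ybe := by
    rintro ⟨x⟩ ⟨y⟩
    show retσ S β hβ (rmk S x) * retσ S β hβ ((retσ S β hβ (rmk S x))⁻¹ (rmk S y)) =
      retσ S β hβ (rmk S y) * retσ S β hβ ((retσ S β hβ (rmk S y))⁻¹ (rmk S x))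
    rw [retσ_mk S β hβ x, retσ_mk S β hβ y]
    have hinvx : (ψ S β hβ (S.σg x))⁻¹ (rmk S y) = rmk S ((S.σ x)⁻¹ y) := by
      rw [← map_inv]; rfl
    have hinvy : (ψ S β hβ (S.σg y))⁻¹ (rmk S x) = rmk S ((S.σ y)⁻¹ x) := by
      rw [← map_inv]; rfl
    rw [hinvx, hinvy, retσ_mk, retσ_mk, ← map_mul, ← map_mul]
    exact congrArg _ (Subtype.ext (S.ybe x y))

theorem retYBE_σ_mk (x : X) : (retYBE S β hβ).σ (rmk S x) = ψ S β hβ (S.σg x) := rfl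

theorem retYBE_σ_mk_mk (x y : X) :
    (retYBE S β hβ).σ (rmk S x) (rmk S y) = rmk S (S.σ x y) := rfl

theorem isRetract_ret : S.IsRetract (retYBE S β hβ) :=
  ⟨rmk S, rmk_surjective S, fun _ _ => rfl,
    fun x x' => ⟨fun h => Quotient.exact h, fun h => Quot.sound h⟩⟩

omit hβ in
theorem closure_sigma_top : Subgroup.closure (Set.range S.σg) = ⊤ := by
  rw [eq_top_iff]
  rintro g -
  have hK : S.permGroup ≤ (Subgroup.closure (Set.range S.σg)).map S.permGroup.subtype := by
    conv_lhs => rw [permGroup]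
    rw [Subgroup.closure_le]
    rintro _ ⟨x, rfl⟩
    exact ⟨S.σg x, Subgroup.subset_closure ⟨x, rfl⟩, rfl⟩
  obtain ⟨h, hh, hval⟩ := hK g.2
  rwa [show h = g from Subtype.ext hval] at hh

theorem retPermGroup_eq_range : (retYBE S β hβ).permGroup = (ψ S β hβ).range := by
  have h1 : Set.range (retYBE S β hβ).σ = ψ S β hβ '' Set.range S.σg := by
    ext g
    constructor
    · rintro ⟨⟨x⟩, rfl⟩
      exact ⟨S.σg x, ⟨x, rfl⟩, rfl⟩
    · rintro ⟨_, ⟨x, rfl⟩, rfl⟩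
      exact ⟨rmk S x, rfl⟩
  rw [permGroup, h1, ← MonoidHom.map_closure, closure_sigma_top, MonoidHom.range_eq_map]

/-- The brace epimorphism `𝒢(X,r) → 𝒢(Ret(X,r))`. -/
def Φ : ↥S.permGroup →* ↥(retYBE S β hβ).permGroup :=
  (ψ S β hβ).codRestrict _ (fun g => by
    rw [retPermGroup_eq_range]; exact ⟨g, rfl⟩)

theorem Φ_surjective : Function.Surjective (Φ S β hβ) := by
  intro b
  obtain ⟨a, ha⟩ : (b : Equiv.Perm (RetX S)) ∈ (ψ S β hβ).range := by
    rw [← retPermGroup_eq_range]; exact b.2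
  exact ⟨a, Subtype.ext ha⟩

theorem Φ_val (g : ↥S.permGroup) : (Φ S β hβ g : Equiv.Perm (RetX S)) = ψ S β hβ g := rfl

theorem Φ_σg (x : X) : Φ S β hβ (S.σg x) = (retYBE S β hβ).σg (rmk S x) :=
  Subtype.ext rfl

theorem Φ_eq_one_iff (g : ↥S.permGroup) : Φ S β hβ g = 1 ↔ β.InSoc g := by
  constructor
  · intro h
    have hψ : ∀ x : X, S.σg ((g : Equiv.Perm X) x) = S.σg x := by
      intro x
      have h2 : ψ S β hβ g (rmk S x) = rmk S x := by
        rw [← Φ_val, h]; rfl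
      exact Subtype.ext (Quotient.exact h2)
    have hfix : ∀ x : X, β.lam g (S.σg x) = S.σg x := by
      intro x; rw [hβ.lam_sigma g x, hψ x]
    exact fun b => hβ.add_gen {h | β.lam g h = h}
      ⟨β.lam_zero g, fun a ha b hb => by
          simp only [Set.mem_setOf_eq] at *; rw [β.lam_add, ha, hb],
        fun a ha => by simp only [Set.mem_setOf_eq] at *; rw [β.lam_neg, ha]⟩
      hfix b
  · intro hs
    apply Subtype.ext
    rw [Φ_val]
    apply Equiv.ext
    rintro ⟨x⟩
    show ψ S β hβ g (rmk S x) = rmk S x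
    rw [ψ_mk]
    apply Quotient.sound
    show S.σ ((g : Equiv.Perm X) x) = S.σ x
    have h3 := hβ.lam_sigma g x
    rw [hs (S.σg x)] at h3
    exact (congrArg Subtype.val h3).symm

theorem Φ_eq_iff (a b : ↥S.permGroup) :
    Φ S β hβ a = Φ S β hβ b ↔ β.InSoc (a⁻¹ * b) := by
  rw [← Φ_eq_one_iff, map_mul, map_inv, inv_mul_eq_one]

theorem Φ_add_congr {a a' b b' : ↥S.permGroup} (ha : Φ S β hβ a = Φ S β hβ a')
    (hb : Φ S β hβ b = Φ S β hβ b') :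
    Φ S β hβ (β.add a b) = Φ S β hβ (β.add a' b') := by
  have hs : β.InSoc (a⁻¹ * a') := (Φ_eq_iff S β hβ a a').mp ha
  have ht : β.InSoc (b⁻¹ * b') := (Φ_eq_iff S β hβ b b').mp hb
  have ha' : a' = a * (a⁻¹ * a') := (mul_inv_cancel_left a a').symm
  have hb' : b' = b * (b⁻¹ * b') := (mul_inv_cancel_left b b').symm
  set s := a⁻¹ * a' with hsdef
  set t := b⁻¹ * b' with htdef
  have key : β.add a' b' =
      (β.add (β.lam a s) (β.lam b t)) * (β.add a b) := by
    rw [β.insoc_mul_eq_add (β.insoc_add (β.insoc_lam hs a) (β.insoc_lam ht b))]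
    rw [ha', hb', β.mul_eq a s, β.mul_eq b t]
    letI := β.toAddCommGroup
    show (a + β.lam a s) + (b + β.lam b t) = (β.lam a s + β.lam b t) + (a + b)
    abel
  rw [key, map_mul,
    (Φ_eq_one_iff S β hβ _).mpr (β.insoc_add (β.insoc_lam hs a) (β.insoc_lam ht b)),
    one_mul]

theorem Φ_neg_congr {a a' : ↥S.permGroup} (ha : Φ S β hβ a = Φ S β hβ a') :
    Φ S β hβ (β.neg a) = Φ S β hβ (β.neg a') := by
  have hs : β.InSoc (a⁻¹ * a') := (Φ_eq_iff S β hβ a a').mp ha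
  have ha' : a' = a * (a⁻¹ * a') := (mul_inv_cancel_left a a').symm
  set s := a⁻¹ * a' with hsdef
  have key : β.neg a' = (β.neg (β.lam a s)) * (β.neg a) := by
    rw [β.insoc_mul_eq_add (β.insoc_neg (β.insoc_lam hs a)), ha', β.mul_eq a s]
    letI := β.toAddCommGroup
    show -(a + β.lam a s) = -(β.lam a s) + -a
    abel
  rw [key, map_mul,
    (Φ_eq_one_iff S β hβ _).mpr (β.insoc_neg (β.insoc_lam hs a)), one_mul]

noncomputable def rsec : ↥(retYBE S β hβ).permGroup → ↥S.permGroup :=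
  Function.surjInv (Φ_surjective S β hβ)

theorem Φ_rsec (a : ↥(retYBE S β hβ).permGroup) : Φ S β hβ (rsec S β hβ a) = a :=
  Function.surjInv_eq (Φ_surjective S β hβ) a

noncomputable def radd (a b : ↥(retYBE S β hβ).permGroup) : ↥(retYBE S β hβ).permGroup :=
  Φ S β hβ (β.add (rsec S β hβ a) (rsec S β hβ b))

noncomputable def rneg (a : ↥(retYBE S β hβ).permGroup) : ↥(retYBE S β hβ).permGroup :=
  Φ S β hβ (β.neg (rsec S β hβ a))

theorem radd_Φ (a b : ↥S.permGroup) :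
    radd S β hβ (Φ S β hβ a) (Φ S β hβ b) = Φ S β hβ (β.add a b) :=
  Φ_add_congr S β hβ (Φ_rsec S β hβ _) (Φ_rsec S β hβ _)

theorem rneg_Φ (a : ↥S.permGroup) :
    rneg S β hβ (Φ S β hβ a) = Φ S β hβ (β.neg a) :=
  Φ_neg_congr S β hβ (Φ_rsec S β hβ _)

/-- The natural brace structure on `𝒢(Ret(X,r))`. -/
noncomputable def retBrace : BraceOps ↥(retYBE S β hβ).permGroup where
  add := radd S β hβ
  neg := rneg S β hβ
  add_assoc a b c := by
    obtain ⟨a, rfl⟩ := Φ_surjective S β hβ a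
    obtain ⟨b, rfl⟩ := Φ_surjective S β hβ b
    obtain ⟨c, rfl⟩ := Φ_surjective S β hβ c
    rw [radd_Φ, radd_Φ, radd_Φ, radd_Φ, β.add_assoc]
  add_comm a b := by
    obtain ⟨a, rfl⟩ := Φ_surjective S β hβ a
    obtain ⟨b, rfl⟩ := Φ_surjective S β hβ b
    rw [radd_Φ, radd_Φ, β.add_comm]
  zero_add a := by
    obtain ⟨a, rfl⟩ := Φ_surjective S β hβ a
    rw [show (1 : ↥(retYBE S β hβ).permGroup) = Φ S β hβ 1 from (map_one _).symm,
      radd_Φ, β.zero_add]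
  neg_add_cancel a := by
    obtain ⟨a, rfl⟩ := Φ_surjective S β hβ a
    rw [rneg_Φ, radd_Φ, β.neg_add_cancel, map_one]
  compat a b c := by
    obtain ⟨a, rfl⟩ := Φ_surjective S β hβ a
    obtain ⟨b, rfl⟩ := Φ_surjective S β hβ b
    obtain ⟨c, rfl⟩ := Φ_surjective S β hβ c
    rw [radd_Φ, ← map_mul, ← map_mul, ← map_mul, radd_Φ, radd_Φ, β.compat]

theorem retLam (a b : ↥S.permGroup) :
    (retBrace S β hβ).lam (Φ S β hβ a) (Φ S β hβ b) = Φ S β hβ (β.lam a b) := by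
  show radd S β hβ (rneg S β hβ (Φ S β hβ a)) (Φ S β hβ a * Φ S β hβ b) =
    Φ S β hβ (β.lam a b)
  rw [rneg_Φ, ← map_mul, radd_Φ]
  rfl

theorem retNatural : (retYBE S β hβ).IsNaturalBrace (retBrace S β hβ) where
  lam_sigma g q := by
    obtain ⟨g, rfl⟩ := Φ_surjective S β hβ g
    induction q using Quotient.ind with
    | _ x =>
      rw [show Quotient.mk (retSetoid S) x = rmk S x from rfl, ← Φ_σg, retLam,
        hβ.lam_sigma, Φ_σg]
      rfl
  add_gen A hA hσ g := by
    obtain ⟨g, rfl⟩ := Φ_surjective S β hβ g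
    have hpre : ∀ h : ↥S.permGroup, h ∈ Φ S β hβ ⁻¹' A := by
      apply hβ.add_gen
      · refine ⟨?_, ?_, ?_⟩
        · show Φ S β hβ 1 ∈ A
          rw [map_one]; exact hA.1
        · intro a ha b hb
          show Φ S β hβ (β.add a b) ∈ A
          rw [← radd_Φ]; exact hA.2.1 _ ha _ hb
        · intro a ha
          show Φ S β hβ (β.neg a) ∈ A
          rw [← rneg_Φ]; exact hA.2.2 _ ha
      · intro x
        show Φ S β hβ (S.σg x) ∈ A
        rw [Φ_σg]; exact hσ (rmk S x)
    exact hpre g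

end SF


namespace SF2
open YBE SF

theorem mpLevelLE_of_subsingleton :
    ∀ (k : ℕ) {X : Type u} (S : YBE X), Nonempty X → Subsingleton X → MPLevelLE k X S := by
  intro k
  induction k with
  | zero => intro X S hne hs; exact ⟨hne, hs⟩
  | succ k ih =>
    intro X S hne hs
    exact ⟨X, S, ⟨id, Function.surjective_id, fun _ _ => rfl,
      fun x x' => ⟨fun h => congrArg S.σ h, fun _ => Subsingleton.elim x x'⟩⟩, ih S hne hs⟩

theorem mpLevelLE_pullback :
    ∀ (k : ℕ) {X Y : Type u} (S : YBE X) (T : YBE Y) (f : X → Y),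
      Function.Bijective f → S.IsHom T f → MPLevelLE k Y T → MPLevelLE k X S := by
  intro k
  induction k with
  | zero =>
    intro X Y S T f hf _ h
    obtain ⟨⟨y⟩, hs⟩ := h
    obtain ⟨x, -⟩ := hf.2 y
    exact ⟨⟨x⟩, ⟨fun a b => hf.1 (Subsingleton.elim _ _)⟩⟩
  | succ k ih =>
    intro X Y S T f hf hhom h
    obtain ⟨Z, U, ⟨g, gsur, ghom, giff⟩, hZ⟩ := h
    refine ⟨Z, U, ⟨g ∘ f, gsur.comp hf.2, fun x y => ?_, fun x x' => ?_⟩, hZ⟩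
    · show g (f (S.σ x y)) = U.σ (g (f x)) (g (f y))
      rw [hhom x y, ghom]
    · rw [Function.comp, Function.comp, giff]
      constructor
      · intro ht
        apply Equiv.ext
        intro y
        apply hf.1
        rw [hhom, hhom, ht]
      · intro hs
        apply Equiv.ext
        intro z
        obtain ⟨y, rfl⟩ := hf.2 z
        rw [← hhom, ← hhom, hs]

theorem subsingleton_of_sigma_inj :
    ∀ (m : ℕ) {X : Type u} (S : YBE X), MPLevelLE m X S →
      (∀ x y : X, S.σ x = S.σ y → x = y) → Subsingleton X := by
  intro m
  induction m with
  | zero => intro X S h _; exact h.2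
  | succ m ih =>
    intro X S h hinj
    obtain ⟨Z, U, ⟨f, fs, fh, fiff⟩, hZ⟩ := h
    have finj : Function.Injective f := fun x x' hx => hinj x x' ((fiff x x').mp hx)
    have hUinj : ∀ z z' : Z, U.σ z = U.σ z' → z = z' := by
      intro z z' hzz
      obtain ⟨x, rfl⟩ := fs z
      obtain ⟨x', rfl⟩ := fs z'
      congr 1
      apply hinj
      apply Equiv.ext
      intro y
      apply finj
      rw [fh, fh, hzz]
    have := ih U hZ hUinj
    exact ⟨fun a b => finj (Subsingleton.elim (f a) (f b))⟩

theorem mpLevelLE_succ_of {k : ℕ} {X : Type u} {S : YBE X} (h : MPLevelLE k X S) :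
    MPLevelLE (k + 1) X S := by
  induction k generalizing X with
  | zero =>
    exact ⟨X, S, ⟨id, Function.surjective_id, fun _ _ => rfl,
      fun x x' => ⟨fun h' => congrArg S.σ h', fun _ => @Subsingleton.elim _ h.2 x x'⟩⟩, h⟩
  | succ k ih =>
    obtain ⟨Z, U, hr, hZ⟩ := h
    exact ⟨Z, U, hr, ih hZ⟩

theorem mpLevelLE_mono {k l : ℕ} (hkl : k ≤ l) {X : Type u} {S : YBE X}
    (h : MPLevelLE k X S) : MPLevelLE l X S := by
  induction l with
  | zero => rwa [Nat.le_zero.mp hkl] at h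
  | succ l ih =>
    rcases Nat.lt_or_ge k (l+1) with hl | hl
    · exact mpLevelLE_succ_of (ih (Nat.lt_succ_iff.mp hl))
    · rwa [Nat.le_antisymm hkl hl] at h

theorem mpLevelLE_ret {k : ℕ} {X : Type u} (S : YBE X) (β : BraceOps ↥S.permGroup)
    (hβ : S.IsNaturalBrace β) (h : MPLevelLE (k + 1) X S) :
    MPLevelLE k (RetX S) (retYBE S β hβ) := by
  obtain ⟨Z, U, ⟨f, fs, fh, fiff⟩, hZ⟩ := h
  refine mpLevelLE_pullback k (retYBE S β hβ) U
    (Quotient.lift f (fun a b hab => (fiff a b).mpr hab)) ⟨?_, ?_⟩ ?_ hZ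
  · rintro ⟨x⟩ ⟨x'⟩ hxx
    exact Quot.sound ((fiff x x').mp hxx)
  · intro z
    obtain ⟨x, rfl⟩ := fs z
    exact ⟨rmk S x, rfl⟩
  · rintro ⟨x⟩ ⟨y⟩
    show f (S.σ x y) = U.σ (f x) (f y)
    exact fh x y
end SF2

namespace SF3
open YBE SF SF2

theorem nat_card_sigma {ι : Type*} [Fintype ι] (f : ι → Type*) [∀ i, Finite (f i)] :
    Nat.card (Σ i, f i) = ∑ i, Nat.card (f i) := by
  letI : ∀ i, Fintype (f i) := fun i => Fintype.ofFinite _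
  simp [Nat.card_eq_fintype_card, Fintype.card_sigma]

variable {X : Type u} (S : YBE X) (β : BraceOps ↥S.permGroup) (hβ : S.IsNaturalBrace β)
include hβ

theorem ret_indec (hind : S.Indecomposable) : (retYBE S β hβ).Indecomposable := by
  rintro ⟨x⟩ ⟨y⟩
  obtain ⟨g, hg, hgx⟩ := hind x y
  refine ⟨ψ S β hβ ⟨g, hg⟩, ?_, ?_⟩
  · rw [retPermGroup_eq_range S β hβ]
    exact ⟨⟨g, hg⟩, rfl⟩
  · show ψ S β hβ ⟨g, hg⟩ (rmk S x) = rmk S y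
    rw [ψ_mk]
    exact congrArg (rmk S) hgx

theorem card_fiber_eq [Finite X] (hind : S.Indecomposable) (q r : RetX S) :
    Nat.card {x // rmk S x = q} = Nat.card {x // rmk S x = r} := by
  obtain ⟨xq, rfl⟩ := Quotient.exists_rep q
  obtain ⟨xr, rfl⟩ := Quotient.exists_rep r
  obtain ⟨g, hg, hgx⟩ := hind xq xr
  have hmm : ∀ (h : ↥S.permGroup) (z w : X), rmk S z = rmk S w →
      rmk S ((h : Equiv.Perm X) z) = rmk S ((h : Equiv.Perm X) w) :=
    fun h z w hz => Quot.sound (sig_g S β hβ h (Quotient.exact hz))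
  apply Nat.card_congr
  refine ⟨fun z => ⟨g z.1, ?_⟩, fun z => ⟨g⁻¹ z.1, ?_⟩, fun z => ?_, fun z => ?_⟩
  · have h2 := hmm ⟨g, hg⟩ z.1 xq z.2
    rw [hgx] at h2
    exact h2
  · have hz : rmk S z.1 = rmk S (g xq) := by rw [hgx]; exact z.2
    have h2 := hmm (⟨g, hg⟩ : ↥S.permGroup)⁻¹ z.1 (g xq) hz
    have h3 : rmk S (g⁻¹ z.1) = rmk S xq := by simpa using h2
    exact h3
  · apply Subtype.ext; simp
  · apply Subtype.ext; simp

theorem card_ret_dvd [Finite X] (hind : S.Indecomposable) :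
    Nat.card (RetX S) ∣ Nat.card X := by
  classical
  cases isEmpty_or_nonempty (RetX S) with
  | inl h =>
    have : IsEmpty X := ⟨fun x => h.1 (rmk S x)⟩
    simp [Nat.card_of_isEmpty]
  | inr h =>
    obtain ⟨q0⟩ := h
    letI : Fintype (RetX S) := Fintype.ofFinite _
    have h1 : Nat.card X = ∑ q : RetX S, Nat.card {x // rmk S x = q} := by
      rw [Nat.card_congr (Equiv.sigmaFiberEquiv (rmk S)).symm, nat_card_sigma]
    have h2 : ∀ q : RetX S, Nat.card {x // rmk S x = q} = Nat.card {x // rmk S x = q0} :=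
      fun q => card_fiber_eq S β hβ hind q q0
    rw [h1, Finset.sum_congr rfl (fun q _ => h2 q), Finset.sum_const, Finset.card_univ,
      smul_eq_mul, ← Nat.card_eq_fintype_card]
    exact Dvd.intro _ rfl

omit hβ in
theorem card_ret_lt [Finite X] (S : YBE X) (hmp : ∃ m, MPLevelLE m X S)
    (hns : ¬ Subsingleton X) : Nat.card (RetX S) < Nat.card X := by
  rcases Nat.lt_or_ge (Nat.card (RetX S)) (Nat.card X) with h | h
  · exact h
  exfalso
  have hle := Nat.card_le_card_of_surjective (rmk S) (rmk_surjective S)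
  have heq : Nat.card X = Nat.card (RetX S) := le_antisymm h hle
  have hbij : Function.Bijective (rmk S) :=
    (Nat.bijective_iff_surjective_and_card (rmk S)).mpr ⟨rmk_surjective S, heq⟩
  obtain ⟨m, hm⟩ := hmp
  exact hns (subsingleton_of_sigma_inj m S hm
    (fun x y hxy => hbij.1 (Quot.sound hxy)))

omit hβ in
theorem squarefree_prod_primes {s : Finset ℕ} (hs : ∀ p ∈ s, p.Prime) :
    Squarefree (∏ p ∈ s, p) := by
  classical
  induction s using Finset.induction with
  | empty => simpa using squarefree_one
  | @insert p s hp ih =>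
    rw [Finset.prod_insert hp]
    have hpp := hs p (Finset.mem_insert_self p s)
    have hcop : Nat.Coprime p (∏ q ∈ s, q) := by
      apply Nat.Coprime.prod_right
      intro q hq
      exact (Nat.coprime_primes hpp (hs q (Finset.mem_insert_of_mem hq))).mpr
        (fun hpq => hp (hpq ▸ hq))
    exact (Nat.squarefree_mul hcop).mpr
      ⟨hpp.prime.squarefree, ih (fun q hq => hs q (Finset.mem_insert_of_mem hq))⟩

end SF3

namespace SF4
open YBE SF SF2 SF3

theorem main1 : ∀ (N : ℕ) {X : Type u} (S : YBE X) (β : BraceOps ↥S.permGroup),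
    S.IsNaturalBrace β → Finite X → Nonempty X → S.Indecomposable →
    (∃ m, MPLevelLE m X S) → Squarefree (Nat.card X) →
    (Nat.card X).primeFactors.card ≤ N → MPLevelLE N X S := by
  intro N
  induction N with
  | zero =>
    intro X S β hβ hfin hne hind hmp hsq hpf
    haveI := hfin; haveI := hne
    have hpos : 0 < Nat.card X := Nat.card_pos
    have hempty : (Nat.card X).primeFactors = ∅ :=
      Finset.card_eq_zero.mp (Nat.le_zero.mp hpf)
    have h1 : Nat.card X = 1 := by
      have h2 := Nat.prod_primeFactors_of_squarefree hsq
      rw [hempty, Finset.prod_empty] at h2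
      exact h2.symm
    exact ⟨hne, (Nat.card_eq_one_iff_unique.mp h1).1⟩
  | succ N ih =>
    intro X S β hβ hfin hne hind hmp hsq hpf
    haveI := hfin; haveI := hne
    by_cases hs : Subsingleton X
    · exact mpLevelLE_of_subsingleton _ S hne hs
    have hposX : 0 < Nat.card X := Nat.card_pos
    have hlt := card_ret_lt S hmp hs
    have hdvd := card_ret_dvd S β hβ hind
    have hretfin : Finite (RetX S) := Quotient.finite _
    have hretne : Nonempty (RetX S) := Nonempty.map (rmk S) hne
    have hretmp : ∃ m, MPLevelLE m (RetX S) (retYBE S β hβ) := by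
      obtain ⟨m, hm⟩ := hmp
      cases m with
      | zero => exact absurd hm.2 hs
      | succ m => exact ⟨m, mpLevelLE_ret S β hβ hm⟩
    have hretsq : Squarefree (Nat.card (RetX S)) := hsq.squarefree_of_dvd hdvd
    have hcardne : Nat.card (RetX S) ≠ Nat.card X := Nat.ne_of_lt hlt
    have hpfss : (Nat.card (RetX S)).primeFactors ⊂ (Nat.card X).primeFactors := by
      refine ⟨Nat.primeFactors_mono hdvd hposX.ne', fun hsub => ?_⟩
      have h1 : (Nat.card (RetX S)).primeFactors = (Nat.card X).primeFactors :=
        le_antisymm (Nat.primeFactors_mono hdvd hposX.ne') hsub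
      have h2 := Nat.prod_primeFactors_of_squarefree hretsq
      have h3 := Nat.prod_primeFactors_of_squarefree hsq
      rw [h1, h3] at h2
      exact hcardne h2.symm
    have hpfle : (Nat.card (RetX S)).primeFactors.card ≤ N := by
      have h4 := Finset.card_lt_card hpfss
      omega
    have hret := ih (retYBE S β hβ) (retBrace S β hβ) (retNatural S β hβ) hretfin hretne
      (ret_indec S β hβ hind) hretmp hretsq hpfle
    exact ⟨RetX S, retYBE S β hβ, isRetract_ret S β hβ, hret⟩

theorem main2 : ∀ (k : ℕ) {X : Type u} (S : YBE X) (β : BraceOps ↥S.permGroup),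
    S.IsNaturalBrace β → MPLevelLE k X S →
    ∀ T : YBE ↥S.permGroup, (∀ a b, T.σ a b = β.lam a b) →
      MPLevelLE k (↥S.permGroup) T := by
  intro k
  induction k with
  | zero =>
    intro X S β hβ h T hT
    haveI : Subsingleton X := h.2
    haveI hp : Subsingleton (Equiv.Perm X) :=
      ⟨fun f g => Equiv.ext fun x => Subsingleton.elim _ _⟩
    exact ⟨⟨1⟩, ⟨fun a b => Subtype.ext (Subsingleton.elim a.1 b.1)⟩⟩
  | succ k ih =>
    intro X S β hβ h T hT
    have hret : MPLevelLE k (RetX S) (retYBE S β hβ) := mpLevelLE_ret S β hβ h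
    have hTbar := ih (retYBE S β hβ) (retBrace S β hβ) (retNatural S β hβ) hret
      (braceYBE (retBrace S β hβ)) (fun _ _ => rfl)
    refine ⟨↥(retYBE S β hβ).permGroup, braceYBE (retBrace S β hβ),
      ⟨Φ S β hβ, Φ_surjective S β hβ, ?_, ?_⟩, hTbar⟩
    · intro a b
      show Φ S β hβ (T.σ a b) = (retBrace S β hβ).lam (Φ S β hβ a) (Φ S β hβ b)
      rw [hT a b]
      exact (retLam S β hβ a b).symm
    · intro a a'
      constructor
      · intro h'
        have hsoc : β.InSoc (a⁻¹ * a') := (Φ_eq_iff S β hβ a a').mp h'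
        apply Equiv.ext
        intro c
        rw [hT, hT]
        exact β.lam_eq_of_insoc hsoc c
      · intro hσ
        apply (Φ_eq_iff S β hβ a a').mpr
        apply β.insoc_of_lam_eq
        intro c
        rw [← hT, ← hT, hσ]
end SF4

end Aux

/-- An indecomposable multipermutation solution of cardinality `p 0 ⋯ p (n-1)`
has multipermutation level at most `n`, and so does the solution associated to the natural
left brace `𝒢(X,r)`. -/
theorem statement2 {n : ℕ} (hn : 0 < n) {X : Type u} (p : Fin n → ℕ)
    (hp : ∀ i, Nat.Prime (p i)) (hinj : Function.Injective p)
    (S : YBE X) (hcard : Nat.card X = Finset.univ.prod p)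
    (hind : S.Indecomposable) (hmp : S.IsMultipermutation)
    (β : BraceOps ↥S.permGroup) (hβ : S.IsNaturalBrace β) :
    YBE.MPLevelLE n X S ∧
      ∀ T : YBE ↥S.permGroup, (∀ a b : ↥S.permGroup, T.σ a b = β.lam a b) →
        YBE.MPLevelLE n (↥S.permGroup) T := by
  classical
  have hcardpos : 0 < Nat.card X := by
    rw [hcard]
    exact Finset.prod_pos (fun i _ => (hp i).pos)
  have hfin : Finite X := Nat.finite_of_card_ne_zero hcardpos.ne'
  have hne : Nonempty X := by
    haveI := hfin
    exact (Nat.card_pos_iff.mp hcardpos).1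
  have hprodeq : (∏ q ∈ Finset.univ.image p, q) = Finset.univ.prod p :=
    Finset.prod_image (fun a _ b _ hab => hinj hab)
  have hprimes : ∀ q ∈ Finset.univ.image p, Nat.Prime q := by
    intro q hq
    obtain ⟨i, _, rfl⟩ := Finset.mem_image.mp hq
    exact hp i
  have hsq : Squarefree (Nat.card X) := by
    rw [hcard, ← hprodeq]
    exact SF3.squarefree_prod_primes hprimes
  have hpf : (Nat.card X).primeFactors.card ≤ n := by
    rw [hcard, ← hprodeq, Nat.primeFactors_prod hprimes]
    calc (Finset.univ.image p).card ≤ Finset.univ.card := Finset.card_image_le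
      _ = n := by simp
  have hmp' : ∃ m, YBE.MPLevelLE m X S := ⟨hmp.choose, hmp.choose_spec.2⟩
  have part1 : YBE.MPLevelLE n X S :=
    SF4.main1 n S β hβ hfin hne hind hmp' hsq hpf
  exact ⟨part1, fun T hT => SF4.main2 n S β hβ part1 T hT⟩
end

section
/- Let f : (X,r) → (Y,s) be an epimorphism of involutive non-degenerate set-theoretic solutions of the Yang–Baxter equation, with Y = {y_1, …, y_n} and X_i = f⁻¹(y_i). If (X,r) is indecomposable, then (Y,s) is indecomposable and |X_i| = |X_j| for all i, j. -/
open Equiv Pointwise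

universe u v

/-! A homomorphism `f` intertwines every `g ∈ 𝒢(X,r)` with some `h ∈ 𝒢(Y,s)`
(`f ∘ g = h ∘ f`), and such a `g` maps the fibre over `y` bijectively onto the fibre over `h y`.
Transitivity of `𝒢(X,r)` on `X`, pushed through the surjection `f`, provides for any `y, y'`
such a pair with `h y = y'`. -/

namespace YBE

variable {X : Type u} {Y : Type v}

theorem IsHom.exists_semiconj {S : YBE X} {T : YBE Y} {f : X → Y} (hf : S.IsHom T f)
    {g : Perm X} (hg : g ∈ S.permGroup) :
    ∃ h ∈ T.permGroup, Function.Semiconj f g h := by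
  induction hg using Subgroup.closure_induction with
  | mem g hg =>
    obtain ⟨x, rfl⟩ := hg
    exact ⟨T.σ (f x), Subgroup.subset_closure (Set.mem_range_self _), hf x⟩
  | one => exact ⟨1, one_mem _, Function.Semiconj.id_right⟩
  | mul g g' _ _ ih ih' =>
    obtain ⟨h, hh, hgh⟩ := ih
    obtain ⟨h', hh', hgh'⟩ := ih'
    exact ⟨h * h', mul_mem hh hh', hgh.comp_right hgh'⟩
  | inv g _ ih =>
    obtain ⟨h, hh, hgh⟩ := ih
    exact ⟨h⁻¹, inv_mem hh,
      hgh.inverses_right (fun z => g.apply_symm_apply z) (fun z => h.symm_apply_apply z)⟩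

theorem Indecomposable.exists_semiconj_apply_eq {S : YBE X} {T : YBE Y} {f : X → Y}
    (hind : S.Indecomposable) (hf : S.IsHom T f) (hsurj : Function.Surjective f) (y y' : Y) :
    ∃ g : Perm X, ∃ h ∈ T.permGroup, Function.Semiconj f g h ∧ h y = y' := by
  obtain ⟨x, rfl⟩ := hsurj y
  obtain ⟨x', rfl⟩ := hsurj y'
  obtain ⟨g, hg, rfl⟩ := hind x x'
  obtain ⟨h, hh, hgh⟩ := hf.exists_semiconj hg
  exact ⟨g, h, hh, hgh, (hgh x).symm⟩

end YBE

def Function.Semiconj.fiberEquiv {X : Type u} {Y : Type v} {f : X → Y} {g : Perm X}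
    {h : Perm Y} (hgh : Function.Semiconj f g h) (y : Y) :
    f ⁻¹' {y} ≃ f ⁻¹' {h y} :=
  g.subtypeEquiv fun x => by
    simp only [Set.mem_preimage, Set.mem_singleton_iff, hgh x, h.apply_eq_iff_eq]

theorem statement4_general {X : Type u} {Y : Type v} (S : YBE X) (T : YBE Y)
    (f : X → Y) (hf : S.IsHom T f) (hsurj : Function.Surjective f)
    (hind : S.Indecomposable) :
    T.Indecomposable ∧ ∀ y y' : Y, Nonempty ((f ⁻¹' {y}) ≃ (f ⁻¹' {y'})) := by
  have key := hind.exists_semiconj_apply_eq hf hsurj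
  refine ⟨fun y y' => ?_, fun y y' => ?_⟩
  · obtain ⟨-, h, hh, -, rfl⟩ := key y y'
    exact ⟨h, hh, rfl⟩
  · obtain ⟨_, h, -, hgh, rfl⟩ := key y y'
    exact ⟨hgh.fiberEquiv y⟩

/-- If `f : (X,r) → (Y,s)` is an epimorphism of solutions and `(X,r)` is
indecomposable, then `(Y,s)` is indecomposable and all fibers of `f` have the same
cardinality. -/
theorem statement4 {X : Type u} {Y : Type v} [Finite Y] (S : YBE X) (T : YBE Y)
    (f : X → Y) (hf : S.IsHom T f) (hsurj : Function.Surjective f)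
    (hind : S.Indecomposable) :
    T.Indecomposable ∧ ∀ y y' : Y, Nonempty ((f ⁻¹' {y}) ≃ (f ⁻¹' {y'})) :=
  statement4_general S T f hf hsurj hind
end

section
/- Let (X, r) be a finite involutive non-degenerate set-theoretic solution of the Yang–Baxter equation. Suppose that for some prime divisor p of |𝒢(X,r)|, the group 𝒢(X,r) has an abelian normal Sylow p-subgroup. Then (X, r) is retractable, i.e., there exist distinct x, y ∈ X with σ_x = σ_y. -/
/-!
Embedding the structure group of `(X,r)` into `ℤ^X ⋊ Sym(X)` by `x ↦ (e_x, σ_x)`, its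
projection to `ℤ^X` is bijective (Etingof–Schedler–Soloviev; injectivity is a diamond lemma on
positive words). Dividing out the translations it contains yields a bijective 1-cocycle
`π : 𝒢(X,r) → A = ℤ^X / V` with `π(σ_x) = [e_x]` and `g • [e_x] = [e_{g(x)}]`: the left brace
structure of `𝒢(X,r)`.

Since `π` is bijective, `π⁻¹(A_q)` is a subgroup of order `|Q|`, so `π⁻¹(A_q) = Q`. The `q`-group
`Q` fixes some `a₀ ≠ 0` of `A_q`, and `g₀ = π⁻¹(a₀) ∈ Q` acts trivially on `A_q` because `Q` is
abelian, and on the `q'`-part of `A` because `Q` is normal. So `g₀ ≠ 1` acts trivially on `A`, and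
any `y` with `g₀ y ≠ y` satisfies `σ_{g₀ y} = σ_y`.
-/

open Equiv Pointwise

universe u v

namespace AddCommGroup

variable {A : Type*} [AddCommGroup A]

theorem card_primaryComponent [Finite A] (p : ℕ) [Fact p.Prime] :
    Nat.card (primaryComponent A p) = p ^ (Nat.card A).factorization p := by
  let P : Sylow p (Multiplicative A) := default
  have hP : CommGroup.primaryComponent (Multiplicative A) p = P := by
    refine le_antisymm (CommGroup.primaryComponent.isPGroup.le_sylow_of_normal P) fun g hg => ?_
    obtain ⟨k, hk⟩ := P.isPGroup' ⟨g, hg⟩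
    exact ⟨k, congrArg Subtype.val hk⟩
  have hcard := P.card_eq_multiplicity
  rwa [← hP] at hcard

theorem eq_zero_of_mem_primaryComponent {p m : ℕ} (hm : m.Coprime p) {a : A}
    (ha : a ∈ primaryComponent A p) (hma : m • a = 0) : a = 0 := by
  obtain ⟨k, hk⟩ := ha
  have hgcd : Nat.gcd m (p ^ k) = 1 := hm.pow_right k
  rw [← AddMonoid.addOrderOf_eq_one_iff, ← Nat.dvd_one, ← hgcd]
  exact Nat.dvd_gcd (addOrderOf_dvd_of_nsmul_eq_zero hma) (addOrderOf_dvd_of_nsmul_eq_zero hk)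

theorem exists_mem_primaryComponent_add_eq [Finite A] {p : ℕ} (hp : p.Prime) (a : A) :
    ∃ u ∈ primaryComponent A p, ∃ w : A, ordCompl[p] (Nat.card A) • w = 0 ∧ u + w = a := by
  set n := Nat.card A
  set m := ordCompl[p] n
  set ν := n.factorization p
  have hn : ((p ^ ν : ℕ) : ℤ) * m = n := by exact_mod_cast Nat.ordProj_mul_ordCompl_eq_self n p
  obtain ⟨x, y, hxy⟩ : IsCoprime ((p ^ ν : ℕ) : ℤ) (m : ℤ) := Nat.isCoprime_iff_coprime.mpr
    ((Nat.coprime_ordCompl hp Nat.card_pos.ne').pow_left ν)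
  have hkill : ∀ z : ℤ, (z * n) • a = 0 := fun z => by
    rw [mul_zsmul, natCast_zsmul, card_nsmul_eq_zero', zsmul_zero]
  refine ⟨(y * m) • a, ⟨ν, ?_⟩, (x * (p ^ ν : ℕ)) • a, ?_, ?_⟩
  · rw [← natCast_zsmul, ← mul_zsmul, ← hkill y, ← hn]
    ring_nf
  · rw [← natCast_zsmul, ← mul_zsmul, ← hkill x, ← hn]
    ring_nf
  · rw [← add_zsmul, add_comm, hxy, one_zsmul]

theorem smul_mem_primaryComponent {G : Type*} [Monoid G] [DistribMulAction G A] (g : G)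
    {p : ℕ} {a : A} (ha : a ∈ primaryComponent A p) : g • a ∈ primaryComponent A p := by
  obtain ⟨k, hk⟩ := ha
  exact ⟨k, by rw [← smul_comm, hk, smul_zero]⟩

theorem exists_ne_zero_mem_primaryComponent_forall_smul_eq {G : Type*} [Group G]
    [DistribMulAction G A] [Finite A] {q : ℕ} [Fact q.Prime] (hdvd : q ∣ Nat.card A)
    {P : Subgroup G} (hP : IsPGroup q P) :
    ∃ a ∈ primaryComponent A q, a ≠ 0 ∧ ∀ h ∈ P, h • a = a := by
  let B : SubMulAction G A :=
    { carrier := primaryComponent A q, smul_mem' := fun g _ => smul_mem_primaryComponent g }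
  have hB : q ∣ Nat.card B := by
    change q ∣ Nat.card (primaryComponent A q)
    rw [card_primaryComponent]
    exact dvd_pow_self q (Nat.Prime.factorization_pos_of_dvd Fact.out Nat.card_pos.ne' hdvd).ne'
  obtain ⟨a, ha, hne⟩ := hP.exists_fixed_point_of_prime_dvd_card_of_fixed_point B hB
    (a := ⟨0, zero_mem (primaryComponent A q)⟩) fun h => Subtype.ext (smul_zero (h : G))
  exact ⟨a, a.2, fun h => hne (Subtype.ext h.symm), fun h hh => congrArg Subtype.val (ha ⟨h, hh⟩)⟩

end AddCommGroup

namespace groupCohomology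

open AddCommGroup

variable {G A : Type*} [Group G] [AddCommGroup A] [DistribMulAction G A] {π : G → A}

theorem IsCocycle₁.map_inv (hπ : IsCocycle₁ π) (g : G) : π g⁻¹ = -(g⁻¹ • π g) := by
  have h := map_inv_of_isCocycle₁ hπ g⁻¹
  rw [inv_inv] at h
  rw [h, neg_neg]

theorem IsCocycle₁.smul_eq_of_commute (hπ : IsCocycle₁ π) {g h : G} (hgh : g * h = h * g)
    (hh : h • π g = π g) : g • π h = π h := by
  have := hπ g h
  rw [hgh, hπ h g, hh, add_comm] at this
  exact add_right_cancel this.symm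

def IsCocycle₁.preimageSubgroup (hπ : IsCocycle₁ π) (B : AddSubgroup A)
    (hB : ∀ g : G, ∀ b ∈ B, g • b ∈ B) : Subgroup G where
  carrier := π ⁻¹' B
  mul_mem' {g h} hg hh := by
    rw [Set.mem_preimage, hπ g h]
    exact add_mem (hB g _ hh) hg
  one_mem' := by simp [map_one_of_isCocycle₁ hπ]
  inv_mem' {g} hg := by
    rw [Set.mem_preimage, hπ.map_inv]
    exact neg_mem (hB _ _ hg)

theorem IsCocycle₁.mem_sylow_iff [Finite G] (hπ : IsCocycle₁ π) (hbij : Function.Bijective π)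
    {q : ℕ} [Fact q.Prime] (Q : Sylow q G) [(Q : Subgroup G).Normal] (g : G) :
    g ∈ Q ↔ π g ∈ primaryComponent A q := by
  have : Finite A := Finite.of_surjective π hbij.2
  let H := hπ.preimageSubgroup (primaryComponent A q) fun g _ => smul_mem_primaryComponent g
  have hH : Nat.card H = q ^ (Nat.card G).factorization q := by
    rw [Nat.card_eq_of_bijective π hbij, ← card_primaryComponent]
    exact Nat.card_congr ((Equiv.ofBijective π hbij).subtypeEquiv fun _ => Iff.rfl)
  have hQ : Sylow.ofCard H hH = Q := by
    have := Sylow.unique_of_normal Q inferInstance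
    exact Subsingleton.elim _ _
  rw [← hQ]
  exact Iff.rfl

theorem IsCocycle₁.smul_eq_of_nsmul_eq_zero (hπ : IsCocycle₁ π) (hsurj : Function.Surjective π)
    {q m : ℕ} (hm : m.Coprime q) {Q : Subgroup G} [Q.Normal]
    (hQ : ∀ g, g ∈ Q ↔ π g ∈ primaryComponent A q) {g : G} (hg : g ∈ Q) {d : A}
    (hd : m • d = 0) : g • d = d := by
  obtain ⟨k, rfl⟩ := hsurj d
  -- Conjugating `g` by `k` stays in `Q`, which puts `k⁻¹ • (g • π k - π k)` into the
  -- `q`-primary component; being killed by `m`, it vanishes.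
  have hconj : π (k⁻¹ * g * k) = k⁻¹ • π g + k⁻¹ • (g • π k - π k) := by
    rw [hπ, hπ, hπ.map_inv, mul_smul, smul_sub]
    abel
  have hq : k⁻¹ • (g • π k - π k) ∈ primaryComponent A q := by
    have h := (hQ _).mp (Subgroup.Normal.conj_mem inferInstance g hg k⁻¹)
    rw [inv_inv, hconj] at h
    simpa using sub_mem h (smul_mem_primaryComponent k⁻¹ ((hQ g).mp hg))
  have hm' : m • (k⁻¹ • (g • π k - π k)) = 0 := by
    rw [← smul_comm, smul_sub, ← smul_comm, hd, smul_zero, sub_zero, smul_zero]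
  have := eq_zero_of_mem_primaryComponent hm hq hm'
  rwa [smul_eq_zero_iff_eq, sub_eq_zero] at this

theorem IsCocycle₁.exists_ne_one_forall_smul_eq [Finite G] (hπ : IsCocycle₁ π)
    (hbij : Function.Bijective π) {q : ℕ} [Fact q.Prime] (hdvd : q ∣ Nat.card G)
    (Q : Sylow q G) [(Q : Subgroup G).Normal]
    (hQab : ∀ g h : G, g ∈ Q → h ∈ Q → g * h = h * g) :
    ∃ g : G, g ≠ 1 ∧ ∀ a : A, g • a = a := by
  have : Finite A := Finite.of_surjective π hbij.2
  have hQ := hπ.mem_sylow_iff hbij Q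
  rw [Nat.card_eq_of_bijective π hbij] at hdvd
  obtain ⟨a₀, ha₀, hne, hfix⟩ :=
    exists_ne_zero_mem_primaryComponent_forall_smul_eq hdvd Q.isPGroup'
  obtain ⟨g₀, rfl⟩ := hbij.2 a₀
  have hg₀ : g₀ ∈ Q := (hQ g₀).mpr ha₀
  refine ⟨g₀, fun h => hne (by rw [h, map_one_of_isCocycle₁ hπ]), fun a => ?_⟩
  obtain ⟨u, hu, w, hw, rfl⟩ := exists_mem_primaryComponent_add_eq (Fact.out : q.Prime) a
  obtain ⟨h, rfl⟩ := hbij.2 u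
  have hh : h ∈ Q := (hQ h).mpr hu
  have hcop := (Nat.coprime_ordCompl (p := q) Fact.out (Nat.card_pos (α := A)).ne').symm
  rw [smul_add, hπ.smul_eq_of_commute (hQab _ _ hg₀ hh) (hfix h hh),
    hπ.smul_eq_of_nsmul_eq_zero hbij.2 hcop hQ hg₀ hw]

end groupCohomology

instance {X : Type u} : DistribMulAction (Perm X) (X → ℤ) where
  smul f v := v ∘ ⇑f⁻¹
  one_smul _ := rfl
  mul_smul _ _ _ := rfl
  smul_zero _ := rfl
  smul_add _ _ _ := rfl

section IntVectors

variable {X : Type u}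

theorem perm_smul_apply (f : Perm X) (v : X → ℤ) (x : X) : (f • v) x = v (f⁻¹ x) := rfl

theorem perm_smul_const (f : Perm X) (c : ℤ) : f • (fun _ => c : X → ℤ) = fun _ => c := rfl

theorem perm_smul_nonneg (f : Perm X) {v : X → ℤ} (hv : 0 ≤ v) : 0 ≤ f • v :=
  fun x => hv (f⁻¹ x)

theorem sum_perm_smul [Fintype X] (f : Perm X) (v : X → ℤ) : ∑ x, (f • v) x = ∑ x, v x :=
  Equiv.sum_comp f⁻¹ v

variable [DecidableEq X]

theorem perm_smul_single (f : Perm X) (x : X) :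
    f • Pi.single x (1 : ℤ) = (Pi.single (f x) 1 : X → ℤ) := by
  ext y
  simp only [perm_smul_apply, Pi.single_apply, Perm.eq_inv_iff_eq, eq_comm]

theorem single_le {v : X → ℤ} (hv : 0 ≤ v) {x : X} (hx : 1 ≤ v x) : Pi.single x 1 ≤ v := by
  intro y
  rcases eq_or_ne y x with rfl | hy
  · simpa using hx
  · simpa [hy] using hv y

theorem single_add_single_le {v : X → ℤ} {x y : X} (hxy : x ≠ y) (hv : 0 ≤ v) (hx : 1 ≤ v x)
    (hy : 1 ≤ v y) : Pi.single x 1 + Pi.single y 1 ≤ v := by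
  intro z
  rcases eq_or_ne z x with rfl | hzx
  · simpa [hxy] using hx
  rcases eq_or_ne z y with rfl | hzy
  · simpa [hzx] using hy
  · simpa [hzx, hzy] using hv z

end IntVectors

/-- The semidirect product `ℤ^X ⋊ Sym(X)`. -/
@[ext] structure AffPerm (X : Type u) where
  vec : X → ℤ
  perm : Perm X

namespace AffPerm

variable {X : Type u}

instance : Group (AffPerm X) where
  mul a b := ⟨a.vec + a.perm • b.vec, a.perm * b.perm⟩
  one := ⟨0, 1⟩
  inv a := ⟨-(a.perm⁻¹ • a.vec), a.perm⁻¹⟩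
  mul_assoc a b c := by
    ext1
    · change a.vec + a.perm • b.vec + (a.perm * b.perm) • c.vec
        = a.vec + a.perm • (b.vec + b.perm • c.vec)
      rw [smul_add, mul_smul, add_assoc]
    · exact mul_assoc _ _ _
  one_mul a := by
    ext1
    · exact zero_add a.vec
    · exact one_mul _
  mul_one a := by
    ext1
    · change a.vec + a.perm • 0 = a.vec
      rw [smul_zero, add_zero]
    · exact mul_one _
  inv_mul_cancel a := by
    ext1
    · exact neg_add_cancel (a.perm⁻¹ • a.vec)
    · exact inv_mul_cancel _

@[simp] theorem mul_vec (a b : AffPerm X) : (a * b).vec = a.vec + a.perm • b.vec := rfl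
@[simp] theorem mul_perm (a b : AffPerm X) : (a * b).perm = a.perm * b.perm := rfl
@[simp] theorem one_vec : (1 : AffPerm X).vec = 0 := rfl
@[simp] theorem inv_vec (a : AffPerm X) : a⁻¹.vec = -(a.perm⁻¹ • a.vec) := rfl
@[simp] theorem inv_perm (a : AffPerm X) : a⁻¹.perm = a.perm⁻¹ := rfl

def permHom : AffPerm X →* Perm X where
  toFun := perm
  map_one' := rfl
  map_mul' _ _ := rfl

def translation : Multiplicative (X → ℤ) →* AffPerm X where
  toFun v := ⟨v.toAdd, 1⟩
  map_one' := rfl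
  map_mul' v w := by ext1 <;> simp

end AffPerm

namespace YBE

variable {X : Type u} [DecidableEq X] (S : YBE X)

def gen (x : X) : AffPerm X := ⟨Pi.single x 1, S.σ x⟩

def word (L : List X) : AffPerm X := (L.map S.gen).prod

@[simp] theorem word_nil : S.word [] = 1 := rfl

@[simp] theorem word_cons (x : X) (L : List X) : S.word (x :: L) = S.gen x * S.word L :=
  List.prod_cons

theorem word_append (L K : List X) : S.word (L ++ K) = S.word L * S.word K := by
  simp [word]

theorem vec_word_cons (x : X) (L : List X) :
    (S.word (x :: L)).vec = Pi.single x 1 + S.σ x • (S.word L).vec := rfl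

theorem vec_word_nonneg (L : List X) : 0 ≤ (S.word L).vec := by
  induction L with
  | nil => exact le_rfl
  | cons x L ih =>
    rw [vec_word_cons]
    exact add_nonneg (Pi.single_nonneg.mpr zero_le_one) (perm_smul_nonneg _ ih)

theorem one_le_vec_word_cons (x : X) (L : List X) : 1 ≤ (S.word (x :: L)).vec x := by
  have : 0 ≤ (S.word L).vec ((S.σ x)⁻¹ x) := S.vec_word_nonneg L _
  rw [vec_word_cons, Pi.add_apply, Pi.single_eq_same, perm_smul_apply]
  omega

theorem vec_word_pair (x y : X) :
    (S.word [x, (S.σ x)⁻¹ y]).vec = Pi.single x 1 + Pi.single y 1 := by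
  rw [vec_word_cons, vec_word_cons, word_nil, AffPerm.one_vec, smul_zero, add_zero,
    perm_smul_single, Perm.inv_def, Equiv.apply_symm_apply]

theorem word_pair_comm (x y : X) : S.word [x, (S.σ x)⁻¹ y] = S.word [y, (S.σ y)⁻¹ x] := by
  ext1
  · rw [vec_word_pair, vec_word_pair, add_comm]
  · simpa [word, gen] using S.ybe x y

def affMonoid : Submonoid (AffPerm X) where
  carrier := Set.range S.word
  mul_mem' := by
    rintro _ _ ⟨L, rfl⟩ ⟨K, rfl⟩
    exact ⟨L ++ K, S.word_append L K⟩
  one_mem' := ⟨[], rfl⟩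

/-- The image of the structure group `G(X,r)` in `ℤ^X ⋊ Sym(X)`. -/
def affGroup : Subgroup (AffPerm X) := Subgroup.closure (Set.range S.gen)

theorem affMonoid_le : S.affMonoid ≤ S.affGroup.toSubmonoid := by
  rintro _ ⟨L, rfl⟩
  induction L with
  | nil => exact one_mem _
  | cons x L ih =>
    rw [word_cons]
    exact mul_mem (Subgroup.subset_closure ⟨x, rfl⟩) ih

theorem vec_nonneg_of_mem_affMonoid {p : AffPerm X} (hp : p ∈ S.affMonoid) : 0 ≤ p.vec := by
  obtain ⟨L, rfl⟩ := hp
  exact S.vec_word_nonneg L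

theorem map_permHom_affGroup : S.affGroup.map AffPerm.permHom = S.permGroup := by
  rw [affGroup, MonoidHom.map_closure, ← Set.range_comp]
  rfl

theorem perm_mem_permGroup {m : AffPerm X} (hm : m ∈ S.affGroup) : m.perm ∈ S.permGroup :=
  S.map_permHom_affGroup ▸ Subgroup.mem_map_of_mem _ hm

theorem exists_mem_affGroup_perm_eq {g : Perm X} (hg : g ∈ S.permGroup) :
    ∃ m ∈ S.affGroup, m.perm = g := by
  rwa [← S.map_permHom_affGroup] at hg

def translations : AddSubgroup (X → ℤ) :=
  Subgroup.toAddSubgroup' (S.affGroup.comap AffPerm.translation)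

theorem mem_translations {v : X → ℤ} :
    v ∈ S.translations ↔ (⟨v, 1⟩ : AffPerm X) ∈ S.affGroup := Iff.rfl

theorem smul_mem_translations {g : Perm X} (hg : g ∈ S.permGroup) {v : X → ℤ}
    (hv : v ∈ S.translations) : g • v ∈ S.translations := by
  obtain ⟨m, hm, rfl⟩ := S.exists_mem_affGroup_perm_eq hg
  have : (⟨m.perm • v, 1⟩ : AffPerm X) = m * ⟨v, 1⟩ * m⁻¹ := by
    ext1 <;> simp
  rw [mem_translations, this]
  exact mul_mem (mul_mem hm hv) (inv_mem hm)

/-- The additive group of the left brace `𝒢(X,r)`. -/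
abbrev BraceAddGroup : Type u := (X → ℤ) ⧸ S.translations

instance : SMul S.permGroup S.BraceAddGroup where
  smul g := QuotientAddGroup.map S.translations S.translations
    (DistribSMul.toAddMonoidHom _ (g : Perm X)) fun _ hv => S.smul_mem_translations g.2 hv

instance : DistribMulAction S.permGroup S.BraceAddGroup :=
  Function.Surjective.distribMulAction (QuotientAddGroup.mk' S.translations)
    QuotientAddGroup.mk_surjective fun _ _ => rfl

theorem smul_mk (g : S.permGroup) (v : X → ℤ) :
    g • (v : S.BraceAddGroup) = ((g : Perm X) • v : X → ℤ) := rfl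

variable [Fintype X]

theorem sum_vec_word (L : List X) : ∑ x, (S.word L).vec x = L.length := by
  induction L with
  | nil => simp
  | cons x L ih =>
    simp only [vec_word_cons, Pi.add_apply, Finset.sum_add_distrib, sum_perm_smul, ih,
      Finset.sum_pi_single', Finset.mem_univ, if_true, List.length_cons]
    push_cast
    ring

theorem length_eq_of_vec_word_eq {L L' : List X} (h : (S.word L).vec = (S.word L').vec) :
    L.length = L'.length := by
  have := congrArg (fun v => ∑ x, v x) h
  simpa only [sum_vec_word, Nat.cast_inj] using this

theorem exists_word_vec_eq {v : X → ℤ} (hv : 0 ≤ v) : ∃ L, (S.word L).vec = v := by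
  suffices ∀ n : ℕ, ∀ v : X → ℤ, 0 ≤ v → ∑ x, v x = n → ∃ L, (S.word L).vec = v from
    this _ v hv (Int.toNat_of_nonneg (Finset.sum_nonneg fun x _ => hv x)).symm
  intro n
  induction n with
  | zero =>
    intro v hv hsum
    exact ⟨[], ((Fintype.sum_eq_zero_iff_of_nonneg hv).mp hsum).symm⟩
  | succ n ih =>
    intro v hv hsum
    obtain ⟨x, hx⟩ : ∃ x, 1 ≤ v x := by
      by_contra! h
      have := Finset.sum_nonpos fun x (_ : x ∈ Finset.univ) => Int.lt_add_one_iff.mp (h x)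
      omega
    obtain ⟨L, hL⟩ := ih ((S.σ x)⁻¹ • (v - Pi.single x 1))
      (perm_smul_nonneg _ (sub_nonneg.mpr (single_le hv hx)))
      (by simp [sum_perm_smul, Finset.sum_sub_distrib, hsum])
    exact ⟨x :: L, by rw [vec_word_cons, hL, smul_inv_smul, add_sub_cancel]⟩

theorem exists_word_append_vec_eq {L : List X} {v : X → ℤ} (hL : (S.word L).vec ≤ v) :
    ∃ K, (S.word (L ++ K)).vec = v := by
  obtain ⟨K, hK⟩ := S.exists_word_vec_eq
    (perm_smul_nonneg (S.word L).perm⁻¹ (sub_nonneg.mpr hL))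
  exact ⟨K, by rw [word_append, AffPerm.mul_vec, hK, smul_inv_smul, add_sub_cancel]⟩

/-- The diamond lemma for the relations `x · σ_x⁻¹(y) = y · σ_y⁻¹(x)`: two words whose first
letters differ can both be rewritten to words starting with these two-letter blocks. -/
theorem word_eq_of_vec_eq {L L' : List X} (h : (S.word L).vec = (S.word L').vec) :
    S.word L = S.word L' := by
  induction hn : L.length using Nat.strong_induction_on generalizing L L' with
  | _ n ih =>
  have cons_eq : ∀ {z : X} {K K' : List X}, K.length < n →
      (S.word (z :: K)).vec = (S.word (z :: K')).vec → S.word (z :: K) = S.word (z :: K') := by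
    intro z K K' hK hKK'
    rw [vec_word_cons, vec_word_cons, add_right_inj, smul_left_cancel_iff] at hKK'
    rw [word_cons, word_cons, ih _ hK hKK' rfl]
  match L, L', S.length_eq_of_vec_word_eq h with
  | [], [], _ => rfl
  | x :: L₁, y :: L₂, hlen =>
    simp only [List.length_cons, Nat.add_right_cancel_iff] at hlen hn
    by_cases hxy : x = y
    · subst hxy
      exact cons_eq (by omega) h
    have hxy_le : Pi.single x 1 + Pi.single y 1 ≤ (S.word (x :: L₁)).vec :=
      single_add_single_le hxy (S.vec_word_nonneg _) (S.one_le_vec_word_cons x L₁)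
        (h ▸ S.one_le_vec_word_cons y L₂)
    obtain ⟨K, hK⟩ := S.exists_word_append_vec_eq ((S.vec_word_pair x y).trans_le hxy_le)
    have hK' : (S.word ([y, (S.σ y)⁻¹ x] ++ K)).vec = (S.word (x :: L₁)).vec := by
      rw [word_append, ← word_pair_comm, ← word_append, hK]
    calc S.word (x :: L₁) = S.word ([x, (S.σ x)⁻¹ y] ++ K) := cons_eq (by omega) hK.symm
      _ = S.word ([y, (S.σ y)⁻¹ x] ++ K) := by rw [word_append, word_pair_comm, word_append]
      _ = S.word (y :: L₂) := (cons_eq (by omega) (hK'.trans h).symm).symm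

theorem eq_of_vec_eq_of_mem_affMonoid {p p' : AffPerm X} (hp : p ∈ S.affMonoid)
    (hp' : p' ∈ S.affMonoid) (h : p.vec = p'.vec) : p = p' := by
  obtain ⟨L, rfl⟩ := hp
  obtain ⟨L', rfl⟩ := hp'
  exact S.word_eq_of_vec_eq h

theorem exists_mul_vec_eq {p : AffPerm X} (hp : p ∈ S.affMonoid) {v : X → ℤ} (hv : p.vec ≤ v) :
    ∃ r ∈ S.affMonoid, (p * r).vec = v := by
  obtain ⟨L, rfl⟩ := hp
  obtain ⟨K, hK⟩ := S.exists_word_append_vec_eq hv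
  exact ⟨S.word K, ⟨K, rfl⟩, by rwa [← word_append]⟩

theorem exists_mul_eq_mul {p p' : AffPerm X} (hp : p ∈ S.affMonoid) (hp' : p' ∈ S.affMonoid) :
    ∃ r ∈ S.affMonoid, ∃ r' ∈ S.affMonoid, p * r = p' * r' := by
  obtain ⟨r, hr, hpr⟩ := S.exists_mul_vec_eq hp (le_sup_left : p.vec ≤ p.vec ⊔ p'.vec)
  obtain ⟨r', hr', hpr'⟩ := S.exists_mul_vec_eq hp' (le_sup_right : p'.vec ≤ p.vec ⊔ p'.vec)
  exact ⟨r, hr, r', hr', S.eq_of_vec_eq_of_mem_affMonoid (mul_mem hp hr) (mul_mem hp' hr')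
    (hpr.trans hpr'.symm)⟩

theorem exists_eq_mul_inv_of_mem_affGroup {g : AffPerm X} (hg : g ∈ S.affGroup) :
    ∃ p ∈ S.affMonoid, ∃ p' ∈ S.affMonoid, g = p * p'⁻¹ := by
  induction hg using Subgroup.closure_induction with
  | mem _ hx =>
    obtain ⟨x, rfl⟩ := hx
    exact ⟨S.gen x, ⟨[x], mul_one _⟩, 1, one_mem _, by rw [inv_one, mul_one]⟩
  | one => exact ⟨1, one_mem _, 1, one_mem _, by rw [inv_one, mul_one]⟩
  | mul _ _ _ _ ihg ihh =>
    obtain ⟨p, hp, p', hp', rfl⟩ := ihg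
    obtain ⟨q, hq, q', hq', rfl⟩ := ihh
    obtain ⟨r, hr, r', hr', hrr'⟩ := S.exists_mul_eq_mul hp' hq
    have hore : p'⁻¹ * q = r * r'⁻¹ := by
      rw [inv_mul_eq_iff_eq_mul, ← mul_assoc, hrr', mul_inv_cancel_right]
    refine ⟨p * r, mul_mem hp hr, q' * r', mul_mem hq' hr', ?_⟩
    calc p * p'⁻¹ * (q * q'⁻¹) = p * (p'⁻¹ * q) * q'⁻¹ := by group
      _ = p * r * (q' * r')⁻¹ := by rw [hore]; group
  | inv _ _ ih =>
    obtain ⟨p, hp, p', hp', rfl⟩ := ih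
    exact ⟨p', hp', p, hp, by group⟩

theorem eq_one_of_vec_eq_zero {g : AffPerm X} (hg : g ∈ S.affGroup) (h : g.vec = 0) : g = 1 := by
  obtain ⟨p, hp, p', hp', rfl⟩ := S.exists_eq_mul_inv_of_mem_affGroup hg
  -- Pad `p'` to a constant vector, which every permutation fixes.
  obtain ⟨r, hr, hp'r⟩ := S.exists_mul_vec_eq hp' (v := fun _ => ∑ x, p'.vec x)
    fun x => Finset.single_le_sum (fun y _ => S.vec_nonneg_of_mem_affMonoid hp' y)
      (Finset.mem_univ x)
  have hpr : (p * r).vec = (p' * r).vec := by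
    rw [show p * r = p * p'⁻¹ * (p' * r) by group, AffPerm.mul_vec, h, hp'r, zero_add,
      perm_smul_const]
  rw [mul_right_cancel (S.eq_of_vec_eq_of_mem_affMonoid (mul_mem hp hr) (mul_mem hp' hr) hpr),
    mul_inv_cancel]

theorem vec_injOn_affGroup : Set.InjOn AffPerm.vec (S.affGroup : Set (AffPerm X)) := by
  intro g hg h hh hgh
  have := S.eq_one_of_vec_eq_zero (mul_mem (inv_mem hh) hg) (by simp [hgh])
  exact (inv_mul_eq_one.mp this).symm

theorem exists_mem_affGroup_vec_eq (z : X → ℤ) : ∃ g ∈ S.affGroup, g.vec = z := by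
  set c := ∑ x, |z x|
  have hc : ∀ x, |z x| ≤ c := fun x =>
    Finset.single_le_sum (fun y _ => abs_nonneg (z y)) (Finset.mem_univ x)
  obtain ⟨u, hu, hu'⟩ := S.exists_mul_vec_eq (one_mem _) (v := fun _ => c)
    fun x => (abs_nonneg _).trans (hc x)
  obtain ⟨w, hw, hw'⟩ := S.exists_mul_vec_eq (one_mem _) (v := (fun _ => c) + u.perm • z)
    fun x => by
      have := abs_le.mp (hc (u.perm⁻¹ x))
      simp only [AffPerm.one_vec, Pi.zero_apply, Pi.add_apply, perm_smul_apply]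
      omega
  rw [one_mul] at hu' hw'
  refine ⟨u⁻¹ * w, mul_mem (inv_mem (S.affMonoid_le hu)) (S.affMonoid_le hw), ?_⟩
  rw [AffPerm.mul_vec, AffPerm.inv_vec, AffPerm.inv_perm, hu', hw', smul_add, inv_smul_smul,
    neg_add_cancel_left]

theorem mk_vec_eq_mk_vec_iff {m m' : AffPerm X} (hm : m ∈ S.affGroup) (hm' : m' ∈ S.affGroup) :
    (m.vec : S.BraceAddGroup) = m'.vec ↔ m.perm = m'.perm := by
  let t : AffPerm X := ⟨-m.vec + m'.vec, 1⟩
  have htm : t * m = ⟨m'.vec, m.perm⟩ := by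
    ext1 <;> simp [t]
  rw [QuotientAddGroup.eq, mem_translations]
  change t ∈ S.affGroup ↔ _
  constructor
  · intro ht
    rw [← S.vec_injOn_affGroup (mul_mem ht hm) hm' (by rw [htm]), htm]
  · intro hperm
    rw [eq_mul_inv_of_mul_eq (htm.trans (by rw [hperm]))]
    exact mul_mem hm' (inv_mem hm)

/-- The bijective 1-cocycle `m.perm ↦ [m.vec]` of the left brace `𝒢(X,r)`. -/
noncomputable def braceCocycle (g : S.permGroup) : S.BraceAddGroup :=
  (S.exists_mem_affGroup_perm_eq g.2).choose.vec

theorem braceCocycle_eq {g : S.permGroup} {m : AffPerm X} (hm : m ∈ S.affGroup)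
    (hmg : m.perm = g) : S.braceCocycle g = m.vec := by
  obtain ⟨hm₀, hm₀g⟩ := (S.exists_mem_affGroup_perm_eq g.2).choose_spec
  exact (S.mk_vec_eq_mk_vec_iff hm₀ hm).mpr (hm₀g.trans hmg.symm)

theorem braceCocycle_σg (x : X) : S.braceCocycle (S.σg x) = (Pi.single x 1 : X → ℤ) :=
  S.braceCocycle_eq (Subgroup.subset_closure ⟨x, rfl⟩) rfl

theorem isCocycle₁_braceCocycle : groupCohomology.IsCocycle₁ S.braceCocycle := by
  intro g h
  obtain ⟨m, hm, hmg⟩ := S.exists_mem_affGroup_perm_eq g.2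
  obtain ⟨m', hm', hmh⟩ := S.exists_mem_affGroup_perm_eq h.2
  rw [S.braceCocycle_eq (mul_mem hm hm') (by rw [AffPerm.mul_perm, hmg, hmh]; rfl),
    S.braceCocycle_eq hm hmg, S.braceCocycle_eq hm' hmh, smul_mk, AffPerm.mul_vec, hmg,
    add_comm]
  rfl

theorem bijective_braceCocycle : Function.Bijective S.braceCocycle := by
  refine ⟨fun g h hgh => ?_, fun a => ?_⟩
  · obtain ⟨m, hm, hmg⟩ := S.exists_mem_affGroup_perm_eq g.2
    obtain ⟨m', hm', hmh⟩ := S.exists_mem_affGroup_perm_eq h.2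
    rw [S.braceCocycle_eq hm hmg, S.braceCocycle_eq hm' hmh, S.mk_vec_eq_mk_vec_iff hm hm',
      hmg, hmh] at hgh
    exact Subtype.ext hgh
  · obtain ⟨z, rfl⟩ := QuotientAddGroup.mk_surjective a
    obtain ⟨m, hm, rfl⟩ := S.exists_mem_affGroup_vec_eq z
    exact ⟨⟨m.perm, S.perm_mem_permGroup hm⟩, S.braceCocycle_eq hm rfl⟩

theorem σ_apply_eq_of_forall_smul_eq {g : S.permGroup}
    (hg : ∀ a : S.BraceAddGroup, g • a = a) (y : X) : S.σ ((g : Perm X) y) = S.σ y := by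
  have : S.braceCocycle (S.σg ((g : Perm X) y)) = S.braceCocycle (S.σg y) := by
    rw [braceCocycle_σg, braceCocycle_σg, ← perm_smul_single, ← smul_mk]
    exact hg _
  exact congrArg Subtype.val (S.bijective_braceCocycle.1 this)

end YBE

/-- If for some prime divisor `q` of `|𝒢(X,r)|` the group `𝒢(X,r)` of a
finite solution has an abelian normal Sylow `q`-subgroup, then `(X,r)` is retractable. -/
theorem statement5 {X : Type u} [Finite X] (S : YBE X) (q : ℕ) (hq : q.Prime)
    (hdvd : q ∣ Nat.card ↥S.permGroup)
    (Q : Sylow q ↥S.permGroup) (hQn : (Q : Subgroup ↥S.permGroup).Normal)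
    (hQab : ∀ a b : ↥S.permGroup, a ∈ (Q : Subgroup ↥S.permGroup) →
      b ∈ (Q : Subgroup ↥S.permGroup) → a * b = b * a) :
    ∃ x y : X, x ≠ y ∧ S.σ x = S.σ y := by
  classical
  cases nonempty_fintype X
  have : Fact q.Prime := ⟨hq⟩
  obtain ⟨g, hg1, hg⟩ := S.isCocycle₁_braceCocycle.exists_ne_one_forall_smul_eq
    S.bijective_braceCocycle hdvd Q hQab
  obtain ⟨y, hy⟩ : ∃ y, (g : Perm X) y ≠ y := by
    by_contra! h
    exact hg1 (Subtype.ext (Equiv.ext h))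
  exact ⟨(g : Perm X) y, y, hy, S.σ_apply_eq_of_forall_smul_eq hg y⟩
end

section
/- Let p_1, …, p_n be n distinct prime numbers and let G be a solvable transitive subgroup of Sym(X), where X is a set with |X| = p_1⋯p_n. Then there exist a permutation τ ∈ Sym_n and normal subgroups {1} = K_0 ⊆ T_1 ⊆ K_1 ⊆ T_2 ⊆ K_2 ⊆ … ⊆ T_n ⊆ K_n = G of G such that for every i = 1, …, n: (i) K_i/K_{i−1} is isomorphic to a subgroup of the direct power (ℤ/(p_{τ(i)}) ⋊ Aut(ℤ/(p_{τ(i)})))^{(p_1⋯p_n)/(p_{τ(1)}⋯p_{τ(i)})}, the prime p_{τ(i)} divides |K_i/K_{i−1}|, and T_i/K_{i−1} is the Sylow p_{τ(i)}-subgroup of K_i/K_{i−1}; (ii) K_i = {g ∈ G : g(T_i(x)) = T_i(x) for all x ∈ X}, where T_i(x) = {t(x) : t ∈ T_i}; (iii) the family 𝒮_i = {K_i(x) : x ∈ X} of K_i-orbits is a system of imprimitivity for G and |𝒮_i| = (p_1⋯p_n)/(p_{τ(1)}⋯p_{τ(i)}). -/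
open Equiv Pointwise

universe u v

/-!
Induction on the number of primes. In the last nontrivial term of the derived series of `G`,
the elements of order dividing a prime `q` form a nontrivial normal subgroup `M` that is abelian
of exponent `q`. Since `G` is transitive and normalises `M`, all `M`-orbits have the same size,
a power of `q` dividing the squarefree `|X|`; so every orbit has exactly `q` points, and the
orbits are blocks of imprimitivity. `G` acts on the `|X| / q` blocks as a solvable transitive
group, and pulling back its series along this action gives `K₂, …, Kₙ`.

The bottom layer is `K₁`, the kernel of the action on blocks. Number a block by `j ↦ m ^ j x`
with `m ∈ M` moving `x`: then `M` acts on the block by translations of `ℤ/(q)`. Since `K₁`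
normalises `M`, each of its elements acts on each block by a permutation of `ℤ/(q)` that
normalises the translations, that is, by an element of the holomorph. `T₁` is the subgroup of
elements acting on every block as a translation. It has exponent `q`, and `K₁ / T₁` embeds in a
power of `Aut(ℤ/(q))`, whose order `q - 1` is prime to `q`.
-/

namespace SquarefreeDegree

open Equiv Subgroup

section Holomorph

variable {N : Type*} [Group N]

variable (N) in
def holAct : N ⋊[MonoidHom.id (MulAut N)] MulAut N →* Perm N where
  toFun h := h.right.toEquiv.trans (Equiv.mulLeft h.left)
  map_one' := by ext; simp
  map_mul' _ _ := by ext; simp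

theorem holAct_apply (h : N ⋊[MonoidHom.id (MulAut N)] MulAut N) (y : N) :
    holAct N h y = h.left * h.right y := rfl

theorem holAct_injective : Function.Injective (holAct N) := by
  intro h h' e
  have hleft : h.left = h'.left := by simpa [holAct_apply] using congr($e 1)
  refine SemidirectProduct.ext hleft (MulEquiv.ext fun y => ?_)
  simpa [holAct_apply, hleft] using congr($e y)

theorem right_eq_one_iff (h : N ⋊[MonoidHom.id (MulAut N)] MulAut N) :
    h.right = 1 ↔ ∃ a, ∀ y, holAct N h y = a * y := by
  refine ⟨fun h1 => ⟨h.left, fun y => by rw [holAct_apply, h1]; rfl⟩, fun ⟨a, ha⟩ => ?_⟩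
  have hleft : h.left = a := by simpa [holAct_apply] using ha 1
  ext y
  simpa [holAct_apply, hleft] using ha y

/-- `σ` is `y ↦ a * ψ y` with `a = σ 1` and `ψ = a⁻¹ * σ`, which is multiplicative. -/
theorem mem_range_holAct {σ : Perm N} (hσ : ∀ n, ∃ n', ∀ y, σ (n * y) = n' * σ y) :
    σ ∈ (holAct N).range := by
  choose n' hn' using hσ
  have hψ : ∀ n y, (σ 1)⁻¹ * σ (n * y) = (σ 1)⁻¹ * σ n * ((σ 1)⁻¹ * σ y) := by
    intro n y
    have h1 := hn' n 1
    rw [mul_one] at h1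
    rw [hn', h1]
    group
  exact ⟨⟨σ 1, MulEquiv.mk' (σ.trans (Equiv.mulLeft (σ 1)⁻¹)) hψ⟩,
    Equiv.ext fun y => mul_inv_cancel_left (σ 1) (σ y)⟩

variable {K : Type*} [Group K]

noncomputable def liftHol (r : K →* Perm N)
    (hr : ∀ k n, ∃ n', ∀ y, r k (n * y) = n' * r k y) :
    K →* N ⋊[MonoidHom.id (MulAut N)] MulAut N :=
  (MonoidHom.ofInjective holAct_injective).symm.toMonoidHom.comp
    (r.codRestrict _ fun k => mem_range_holAct (hr k))

theorem holAct_liftHol (r : K →* Perm N) (hr : ∀ k n, ∃ n', ∀ y, r k (n * y) = n' * r k y)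
    (k : K) : holAct N (liftHol r hr k) = r k :=
  MonoidHom.apply_ofInjective_symm holAct_injective _

end Holomorph

theorem not_dvd_index_of_ker_eq {q : ℕ} [Fact q.Prime] {K ι : Type*} [Group K] [Finite ι]
    (Ψ : K →* (ι → MulAut (Multiplicative (ZMod q)))) {H : Subgroup K} (hΨ : Ψ.ker = H) :
    ¬ q ∣ H.index := by
  have hq : q.Prime := Fact.out
  have hcard : Nat.card (ι → MulAut (Multiplicative (ZMod q))) = (q - 1) ^ Nat.card ι := by
    rw [Nat.card_fun, IsCyclic.card_mulAut, Nat.card_congr Multiplicative.toAdd, Nat.card_zmod,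
      Nat.totient_prime hq]
  intro h
  rw [← hΨ, index_ker] at h
  exact Nat.not_dvd_of_pos_of_lt (Nat.sub_pos_of_lt hq.one_lt) (Nat.sub_lt hq.pos one_pos)
    (hq.dvd_of_dvd_pow (hcard ▸ h.trans (card_subgroup_dvd_card Ψ.range)))

open scoped commutatorElement in
theorem exists_normal_comm_ne_bot (H : Type*) [Group H] [Group.IsSolvable H] [Nontrivial H] :
    ∃ A : Subgroup H, A.Normal ∧ A ≠ ⊥ ∧ ∀ a ∈ A, ∀ b ∈ A, a * b = b * a := by
  classical
  have hex := (Group.isSolvable_def H).mp inferInstance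
  obtain ⟨k, hk⟩ := Nat.exists_eq_succ_of_ne_zero fun h0 : Nat.find hex = 0 =>
    top_ne_bot (h0 ▸ Nat.find_spec hex : derivedSeries H 0 = ⊥)
  refine ⟨derivedSeries H k, derivedSeries_normal H k, Nat.find_min hex (by omega), ?_⟩
  intro a ha b hb
  have : ⁅a, b⁆ ∈ derivedSeries H (k + 1) := commutator_mem_commutator ha hb
  rw [← Nat.succ_eq_add_one, ← hk, Nat.find_spec hex] at this
  exact commutatorElement_eq_one_iff_mul_comm.mp this

/-- Take `M = {a ∈ A | a ^ q = 1}` for an abelian normal `A ≠ ⊥` and a prime `q ∣ |A|`. -/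
theorem exists_normal_elemAbelian (H : Type*) [Group H] [Finite H] [Group.IsSolvable H]
    [Nontrivial H] :
    ∃ q, q.Prime ∧ ∃ M : Subgroup H, M.Normal ∧ M ≠ ⊥ ∧
      (∀ a ∈ M, ∀ b ∈ M, a * b = b * a) ∧ ∀ m ∈ M, m ^ q = 1 := by
  obtain ⟨A, hAn, hA, hAc⟩ := exists_normal_comm_ne_bot H
  obtain ⟨q, hq, hqA⟩ := Nat.exists_prime_and_dvd (one_lt_card_iff_ne_bot A |>.mpr hA).ne'
  have := Fact.mk hq
  obtain ⟨a, ha⟩ := exists_prime_orderOf_dvd_card' q hqA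
  let M : Subgroup H :=
    { carrier := {x | x ∈ A ∧ x ^ q = 1}
      one_mem' := ⟨A.one_mem, one_pow q⟩
      mul_mem' := fun hx hy => ⟨A.mul_mem hx.1 hy.1, by
        rw [(Commute.mul_pow (hAc _ hx.1 _ hy.1)), hx.2, hy.2, one_mul]⟩
      inv_mem' := fun hx => ⟨A.inv_mem hx.1, by rw [inv_pow, hx.2, inv_one]⟩ }
  refine ⟨q, hq, M, ⟨fun x hx g => ⟨hAn.conj_mem x hx.1 g, ?_⟩⟩, ?_,
    fun a ha b hb => hAc a ha.1 b hb.1, fun m hm => hm.2⟩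
  · rw [conj_pow, hx.2, mul_one, mul_inv_cancel]
  · have ha1 : (a : H) ≠ 1 := fun h =>
      hq.one_lt.ne' (ha ▸ orderOf_eq_one_iff.mpr (Subtype.ext h))
    refine (ne_bot_iff_exists_ne_one).mpr
      ⟨⟨a, a.2, ?_⟩, fun h => ha1 (congrArg Subtype.val h)⟩
    rw [← SubgroupClass.coe_pow, ← ha, pow_orderOf_eq_one, OneMemClass.coe_one]

section FinProd

variable {n : ℕ} {p : Fin n → ℕ}

theorem squarefree_prod_primes (hp : ∀ i, (p i).Prime) (hinj : Function.Injective p) :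
    Squarefree (∏ i, p i) :=
  Finset.squarefree_prod_of_pairwise_isCoprime
    (fun i _ j _ hij => Nat.coprime_iff_isRelPrime.mp
      ((Nat.coprime_primes (hp i) (hp j)).mpr (hinj.ne hij)))
    fun i _ => (hp i).prime.squarefree

theorem exists_eq_of_prime_dvd_prod (hp : ∀ i, (p i).Prime) {q : ℕ} (hq : q.Prime)
    (h : q ∣ ∏ i, p i) : ∃ j, p j = q := by
  obtain ⟨j, -, hj⟩ := hq.prime.exists_mem_finset_dvd h
  exact ⟨j, ((Nat.prime_dvd_prime_iff_eq hq (hp j)).mp hj).symm⟩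

theorem prod_filter_succ_lt (f : Fin (n + 1) → ℕ) (i : Fin n) :
    ∏ j ∈ Finset.univ.filter (fun j => i.succ < j), f j
      = ∏ j ∈ Finset.univ.filter (fun j : Fin n => i < j), f j.succ := by
  rw [Finset.filter_lt_eq_Ioi, Finset.filter_lt_eq_Ioi, ← Fin.map_succEmb_Ioi, Finset.prod_map]
  rfl

theorem prod_filter_zero_lt (f : Fin (n + 1) → ℕ) :
    ∏ j ∈ Finset.univ.filter (fun j => 0 < j), f j = ∏ j : Fin n, f j.succ := by
  rw [Finset.filter_lt_eq_Ioi, Fin.Ioi_zero_eq_map, Finset.prod_map]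
  rfl

theorem prod_eq_mul_prod_swap_succ (f : Fin (n + 1) → ℕ) (j : Fin (n + 1)) :
    ∏ i, f i = f j * ∏ k : Fin n, f (swap 0 j k.succ) := by
  rw [← Equiv.prod_comp (swap 0 j), Fin.prod_univ_succ, swap_apply_left]

end FinProd

section Transport

variable {X : Type u} {α K : Type*} [Group K]

noncomputable def transportHom (ρ : K →* Perm X) (e : α → X) (he : Function.Injective e)
    (hK : ∀ k a, ρ k (e a) ∈ Set.range e) : K →* Perm α :=
  MonoidHom.toHomPerm
    { toFun := fun k a => (Equiv.ofInjective e he).symm ⟨ρ k (e a), hK k a⟩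
      map_one' := funext fun a => he <| by simp; rfl
      map_mul' := fun k l => funext fun a => he <| by
        change e ((Equiv.ofInjective e he).symm _)
          = e ((Equiv.ofInjective e he).symm ⟨ρ k (e ((Equiv.ofInjective e he).symm _)), _⟩)
        simp only [Equiv.apply_ofInjective_symm, map_mul, Perm.mul_apply] }

theorem apply_transportHom (ρ : K →* Perm X) (e : α → X) (he : Function.Injective e)
    (hK : ∀ k a, ρ k (e a) ∈ Set.range e) (k : K) (a : α) :
    e (transportHom ρ e he hK k a) = ρ k (e a) :=
  Equiv.apply_ofInjective_symm he _

end Transport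

section OrbitCoord

variable {X : Type u} (q : ℕ)

/-- Indexed by `Multiplicative (ZMod q)` so that translating the index is multiplication. -/
def orbitCoord (m : Perm X) (x : X) (j : Multiplicative (ZMod q)) : X := (m ^ j.toAdd.val) x

variable {q} [Fact q.Prime] {m : Perm X} {x : X}

theorem orbitCoord_one : orbitCoord q m x 1 = x := by
  simp [orbitCoord]

theorem orbitCoord_mul (hm : m ^ q = 1) (j k : Multiplicative (ZMod q)) :
    orbitCoord q m x (j * k) = (m ^ j.toAdd.val) (orbitCoord q m x k) := by
  rw [orbitCoord, orbitCoord, ← Perm.mul_apply, ← pow_add, toAdd_mul, ZMod.val_add,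
    ← pow_eq_pow_mod _ hm]

theorem eq_one_of_orbitCoord_eq_self (hm : m ^ q = 1) (hmx : m x ≠ x)
    {j : Multiplicative (ZMod q)} (hj : orbitCoord q m x j = x) : j = 1 := by
  have hperiod : MulAction.period m x = q := by
    refine ((Nat.dvd_prime Fact.out).mp ((MulAction.period_dvd_orderOf m x).trans
      (orderOf_dvd_of_pow_eq_one hm))).resolve_left ?_
    rwa [MulAction.period_eq_one_iff]
  have hdvd : MulAction.period m x ∣ j.toAdd.val := MulAction.pow_smul_eq_iff_period_dvd.mp hj
  rw [hperiod] at hdvd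
  have : j.toAdd = 0 := (ZMod.val_eq_zero _).mp (Nat.eq_zero_of_dvd_of_lt hdvd (ZMod.val_lt _))
  exact toAdd_eq_zero.mp this

theorem orbitCoord_injective (hm : m ^ q = 1) (hmx : m x ≠ x) :
    Function.Injective (orbitCoord q m x) := by
  intro j k hjk
  have : orbitCoord q m x (k⁻¹ * j) = x := by
    rw [orbitCoord_mul hm, hjk, ← orbitCoord_mul hm, inv_mul_cancel, orbitCoord_one]
  exact (inv_mul_eq_one.mp (eq_one_of_orbitCoord_eq_self hm hmx this)).symm

end OrbitCoord

section Blocks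

open MulAction

variable {X : Type u} {G : Subgroup (Perm X)}

theorem orbIn_eq_orbit (M : Subgroup G) (x : X) : orbIn M x = orbit M x := by
  ext y
  exact ⟨fun ⟨t, ht, h⟩ => ⟨⟨t, ht⟩, h⟩, fun ⟨m, h⟩ => ⟨m, m.2, h⟩⟩

theorem mem_orbIn_self (M : Subgroup G) (x : X) : x ∈ orbIn M x := ⟨1, M.one_mem, rfl⟩

theorem apply_mem_orbIn {M : Subgroup G} {x y : X} (hy : y ∈ orbIn M x) {t : G} (ht : t ∈ M) :
    (t : Perm X) y ∈ orbIn M x := by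
  obtain ⟨s, hs, rfl⟩ := hy
  exact ⟨t * s, M.mul_mem ht hs, rfl⟩

theorem image_orbIn (M : Subgroup G) [hM : M.Normal] (g : G) (x : X) :
    (g : Perm X) '' orbIn M x = orbIn M ((g : Perm X) x) := by
  ext y
  constructor
  · rintro ⟨z, ⟨t, ht, rfl⟩, rfl⟩
    exact ⟨g * t * g⁻¹, hM.conj_mem t ht g, by simp⟩
  · rintro ⟨t, ht, rfl⟩
    refine ⟨((g⁻¹ * t * g : G) : Perm X) x, ⟨g⁻¹ * t * g, ?_, rfl⟩, by simp⟩
    simpa using hM.conj_mem t ht g⁻¹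

theorem card_orbIn_dvd_card (M : Subgroup G) (x : X) : Nat.card (orbIn M x) ∣ Nat.card M := by
  rw [orbIn_eq_orbit, Nat.card_coe_set_eq, ← MulAction.index_stabilizer]
  exact index_dvd_card _

theorem card_orbIn_eq_card_orbIn (M : Subgroup G) [M.Normal]
    (htrans : ∀ x y : X, ∃ g ∈ G, g x = y) (x y : X) :
    Nat.card (orbIn M x) = Nat.card (orbIn M y) := by
  obtain ⟨g, hg, rfl⟩ := htrans x y
  rw [← image_orbIn M ⟨g, hg⟩ x, Nat.card_image_of_injective g.injective]

theorem exists_card_orbIn_ne_one {M : Subgroup G} (hM : M ≠ ⊥) :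
    ∃ x : X, Nat.card (orbIn M x) ≠ 1 := by
  obtain ⟨t, ht⟩ := (ne_bot_iff_exists_ne_one).mp hM
  obtain ⟨x, hx⟩ : ∃ x, ((t : G) : Perm X) x ≠ x := by
    by_contra! h
    exact ht (Subtype.ext (Subtype.ext (Perm.ext h)))
  refine ⟨x, fun h1 => hx ?_⟩
  obtain ⟨y, hy⟩ := Nat.card_eq_one_iff_exists.mp h1
  exact congrArg Subtype.val ((hy ⟨_, t, t.2, rfl⟩).trans (hy ⟨x, mem_orbIn_self M x⟩).symm)

abbrev Blk (M : Subgroup G) : Type u := orbitRel.Quotient M X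

variable (M : Subgroup G)

def blk (x : X) : Blk M := Quotient.mk _ x

theorem blk_surjective : Function.Surjective (blk M) := Quotient.mk_surjective

theorem blk_eq_blk_iff {x y : X} : blk M x = blk M y ↔ x ∈ orbIn M y := by
  rw [blk, blk, Quotient.eq, orbitRel_apply, orbIn_eq_orbit]

theorem orbIn_eq_fiber (x : X) : orbIn M x = {y | blk M y = blk M x} := by
  ext y
  exact (blk_eq_blk_iff M).symm

theorem orbIn_out (b : Blk M) : orbIn M b.out = {y | blk M y = b} := by
  rw [orbIn_eq_fiber]
  simp only [blk, Quotient.out_eq]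

theorem card_range_orbIn : Nat.card (Set.range fun x : X => orbIn M x) = Nat.card (Blk M) := by
  have : (fun x : X => orbIn M x) = orbitRel.Quotient.orbit ∘ blk M := by
    ext1 x
    rw [Function.comp_apply, blk, ← Quotient.mk''_eq_mk, orbitRel.Quotient.orbit_mk,
      orbIn_eq_orbit]
  rw [this, Set.range_comp, (blk_surjective M).range_eq, Set.image_univ,
    Nat.card_range_of_injective orbitRel.Quotient.orbit_injective]

theorem card_eq_card_blk_mul [Finite X] {c : ℕ} (hc : ∀ x, Nat.card (orbIn M x) = c) :
    Nat.card X = Nat.card (Blk M) * c := by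
  have : Fintype (Blk M) := Fintype.ofFinite _
  rw [Nat.card_congr (selfEquivSigmaOrbits M X), Nat.card_sigma]
  simp only [← orbIn_eq_orbit, hc, Finset.sum_const, Finset.card_univ, smul_eq_mul,
    Nat.card_eq_fintype_card]

variable {M} in
/-- All orbits of a normal `q`-subgroup have the same size, a power of `q` dividing `|X|`. -/
theorem card_orbIn_eq_prime [Finite X] [M.Normal] {q : ℕ} [Fact q.Prime]
    (hpow : ∀ m ∈ M, m ^ q = 1) (hM : M ≠ ⊥) (htrans : ∀ x y : X, ∃ g ∈ G, g x = y)
    (hsq : ¬ q ^ 2 ∣ Nat.card X) (x : X) : Nat.card (orbIn M x) = q := by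
  have hpg : IsPGroup q M := fun m => ⟨1, Subtype.ext (by simpa using hpow m m.2)⟩
  obtain ⟨e, he⟩ := hpg.card_orbit x
  rw [← orbIn_eq_orbit] at he
  have hconst := card_orbIn_eq_card_orbIn M htrans
  obtain ⟨y, hy⟩ := exists_card_orbIn_ne_one hM
  have hdvd : q ^ e ∣ Nat.card X :=
    he ▸ (card_eq_card_blk_mul M (fun z => hconst z x)).symm ▸ dvd_mul_left _ _
  have he1 : e ≠ 0 := fun h0 => hy (by rw [hconst y x, he, h0, pow_zero])
  have he2 : e < 2 := by
    by_contra! h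
    exact hsq ((pow_dvd_pow q h).trans hdvd)
  rw [he, show e = 1 by omega, pow_one]

instance [M.Normal] : MulAction G (Blk M) where
  smul g := Quotient.map (fun x => (g : Perm X) x) fun x y h => by
    have h' : x ∈ orbIn M y := by rw [orbIn_eq_orbit]; exact orbitRel_apply.mp h
    refine orbitRel_apply.mpr ?_
    rw [← orbIn_eq_orbit, ← image_orbIn]
    exact ⟨x, h', rfl⟩
  one_smul := Quotient.ind fun _ => rfl
  mul_smul _ _ := Quotient.ind fun _ => rfl

variable [M.Normal]

def rho : G →* Perm (Blk M) := toPermHom G (Blk M)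

theorem rho_blk (g : G) (x : X) : rho M g (blk M x) = blk M ((g : Perm X) x) := rfl

theorem exists_mem_range_rho_apply_eq (htrans : ∀ x y : X, ∃ g ∈ G, g x = y) (b b' : Blk M) :
    ∃ g ∈ (rho M).range, g b = b' := by
  obtain ⟨x, rfl⟩ := blk_surjective M b
  obtain ⟨y, rfl⟩ := blk_surjective M b'
  obtain ⟨g, hg, rfl⟩ := htrans x y
  exact ⟨rho M ⟨g, hg⟩, ⟨⟨g, hg⟩, rfl⟩, rfl⟩

theorem mem_ker_rho_iff (g : G) : g ∈ (rho M).ker ↔ ∀ x, (g : Perm X) x ∈ orbIn M x := by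
  rw [MonoidHom.mem_ker, Perm.ext_iff, (blk_surjective M).forall]
  simp only [rho_blk, blk_eq_blk_iff, Perm.one_apply]

theorem apply_mem_orbIn_of_mem_ker {k : G} (hk : k ∈ (rho M).ker) {x y : X}
    (hy : y ∈ orbIn M x) : (k : Perm X) y ∈ orbIn M x := by
  rw [orbIn_eq_fiber] at hy ⊢
  exact ((blk_eq_blk_iff M).mpr ((mem_ker_rho_iff M k).mp hk y)).trans hy

theorem mem_ker_rho_iff_image (g : G) :
    g ∈ (rho M).ker ↔ ∀ x, (g : Perm X) '' orbIn M x = orbIn M x := by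
  rw [mem_ker_rho_iff]
  refine forall_congr' fun x => ⟨fun h => ?_, fun h => h ▸ ⟨x, mem_orbIn_self M x, rfl⟩⟩
  rw [image_orbIn, orbIn_eq_fiber, orbIn_eq_fiber, (blk_eq_blk_iff M).mpr h]

theorem le_ker_rho : M ≤ (rho M).ker :=
  fun t ht => (mem_ker_rho_iff M t).mpr fun _ => ⟨t, ht, rfl⟩

theorem orbIn_ker_rho (x : X) : orbIn (rho M).ker x = orbIn M x := by
  refine subset_antisymm ?_ fun y ⟨t, ht, h⟩ => ⟨t, le_ker_rho M ht, h⟩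
  rintro y ⟨t, ht, rfl⟩
  exact (mem_ker_rho_iff M t).mp ht x

theorem orbIn_comap_rangeRestrict (S : Subgroup (rho M).range) (x : X) :
    orbIn (S.comap (rho M).rangeRestrict) x = blk M ⁻¹' orbIn S (blk M x) := by
  ext y
  constructor
  · rintro ⟨t, ht, rfl⟩
    exact ⟨(rho M).rangeRestrict t, ht, rfl⟩
  · rintro ⟨s, hs, hsx⟩
    obtain ⟨t, rfl⟩ := (rho M).rangeRestrict_surjective s
    obtain ⟨m, hm, rfl⟩ := (blk_eq_blk_iff M).mp hsx.symm
    refine ⟨m * t, ?_, rfl⟩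
    have hm1 : (rho M).rangeRestrict m = 1 := by
      rw [← MonoidHom.mem_ker, MonoidHom.ker_rangeRestrict]
      exact le_ker_rho M hm
    rwa [Subgroup.mem_comap, map_mul, hm1, one_mul]

theorem image_preimage_blk (g : G) (s : Set (Blk M)) :
    (g : Perm X) '' (blk M ⁻¹' s) = blk M ⁻¹' (rho M g '' s) := by
  ext y
  constructor
  · rintro ⟨z, hz, rfl⟩
    exact ⟨blk M z, hz, rfl⟩
  · rintro ⟨b, hb, hby⟩
    refine ⟨(g : Perm X)⁻¹ y, ?_, by simp⟩
    have : rho M g (blk M ((g : Perm X)⁻¹ y)) = rho M g b := by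
      rw [hby, rho_blk]
      simp
    rwa [Set.mem_preimage, (rho M g).injective this]

theorem relIndex_comap_rangeRestrict (L K : Subgroup (rho M).range) :
    (L.comap (rho M).rangeRestrict).relIndex (K.comap (rho M).rangeRestrict) = L.relIndex K := by
  rw [relIndex_comap, map_comap_eq_self_of_surjective (rho M).rangeRestrict_surjective]

end Blocks

section Layers

variable {X : Type u} {G : Subgroup (Perm X)}

/-- Conditions (i)–(iii) of the theorem for one step `L = K_{i-1} ≤ T = T_i ≤ K = K_i`, with
`q = p_{τ(i)}` and `N` the number of blocks. -/
def IsLayer (q N : ℕ) (L T K : Subgroup G) : Prop :=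
  (∃ φ : K →* (Fin N → Hol q), φ.ker = L.subgroupOf K) ∧
    q ∣ L.relIndex K ∧ (∃ k : ℕ, L.relIndex T = q ^ k) ∧ ¬ q ∣ T.relIndex K ∧
    (∀ g : G, g ∈ K ↔ ∀ x : X, ⇑(g : Perm X) '' orbIn T x = orbIn T x) ∧
    (∀ g : G, ∀ x : X, ∃ x' : X, ⇑(g : Perm X) '' orbIn K x = orbIn K x') ∧
    Nat.card (Set.range fun x : X => orbIn K x) = N

theorem IsLayer.comap (M : Subgroup G) [M.Normal] {q N : ℕ} {L T K : Subgroup (rho M).range}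
    (h : IsLayer q N L T K) :
    IsLayer q N (L.comap (rho M).rangeRestrict) (T.comap (rho M).rangeRestrict)
      (K.comap (rho M).rangeRestrict) := by
  obtain ⟨⟨φ, hφ⟩, hdvd, hpow, hndvd, hmem, hblock, hcard⟩ := h
  have hpre := Set.preimage_injective.mpr (blk_surjective M)
  refine ⟨⟨φ.comp ((rho M).rangeRestrict.subgroupComap K), ?_⟩, ?_, ?_, ?_, ?_, ?_, ?_⟩
  · rw [← MonoidHom.comap_ker, hφ]
    rfl
  · rwa [relIndex_comap_rangeRestrict]
  · rwa [relIndex_comap_rangeRestrict]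
  · rwa [relIndex_comap_rangeRestrict]
  · intro g
    rw [Subgroup.mem_comap, hmem, (blk_surjective M).forall]
    refine forall_congr' fun x => ?_
    rw [orbIn_comap_rangeRestrict, image_preimage_blk]
    exact hpre.eq_iff.symm
  · intro g x
    obtain ⟨b, hb⟩ := hblock ((rho M).rangeRestrict g) (blk M x)
    obtain ⟨x', rfl⟩ := blk_surjective M b
    refine ⟨x', ?_⟩
    rw [orbIn_comap_rangeRestrict, orbIn_comap_rangeRestrict, image_preimage_blk]
    exact congrArg _ hb
  · have : (fun x : X => orbIn (K.comap (rho M).rangeRestrict) x)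
        = Set.preimage (blk M) ∘ (fun b => orbIn K b) ∘ blk M := by
      ext1 x
      exact orbIn_comap_rangeRestrict M K x
    rw [this, Set.range_comp, Set.range_comp, (blk_surjective M).range_eq, Set.image_univ,
      Nat.card_image_of_injective hpre, hcard]

theorem _root_.Set.EqOn.perm_pow {f g : Perm X} {s : Set X} (h : Set.EqOn f g s)
    (hg : Set.MapsTo g s s) (k : ℕ) : Set.EqOn (⇑(f ^ k)) (⇑(g ^ k)) s := by
  induction k with
  | zero => exact fun _ _ => rfl
  | succ k ih =>
    intro y hy
    rw [pow_succ, pow_succ, Perm.mul_apply, Perm.mul_apply, h hy, ih (hg hy)]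

/-- `T₁` of the theorem, when `M` is the normal subgroup whose orbits are the first blocks. -/
def locallyIn (M : Subgroup G) : Subgroup G where
  carrier := {g | ∀ x, ∃ t ∈ M, Set.EqOn (g : Perm X) (t : Perm X) (orbIn M x)}
  one_mem' x := ⟨1, M.one_mem, fun _ _ => rfl⟩
  mul_mem' {g h} hg hh x := by
    obtain ⟨s, hs, hgs⟩ := hg x
    obtain ⟨t, ht, hht⟩ := hh x
    refine ⟨s * t, M.mul_mem hs ht, fun y hy => ?_⟩
    simp only [coe_mul, Perm.mul_apply, hht hy, hgs (apply_mem_orbIn hy ht)]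
  inv_mem' {g} hg x := by
    obtain ⟨t, ht, hgt⟩ := hg x
    refine ⟨t⁻¹, M.inv_mem ht, fun y hy => ?_⟩
    have hty := hgt (apply_mem_orbIn hy (M.inv_mem ht))
    simp only [coe_inv] at hty ⊢
    rw [Perm.inv_eq_iff_eq, hty]
    simp

variable {M : Subgroup G}

theorem mem_locallyIn_iff {g : G} :
    g ∈ locallyIn M ↔ ∀ x, ∃ t ∈ M, Set.EqOn (g : Perm X) (t : Perm X) (orbIn M x) :=
  Iff.rfl

theorem le_locallyIn : M ≤ locallyIn M := fun t ht _ => ⟨t, ht, fun _ _ => rfl⟩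

instance [hM : M.Normal] : (locallyIn M).Normal where
  conj_mem g hg h x := by
    obtain ⟨t, ht, hgt⟩ := hg (((h⁻¹ : G) : Perm X) x)
    refine ⟨h * t * h⁻¹, hM.conj_mem t ht h, fun y hy => ?_⟩
    have hy' : ((h⁻¹ : G) : Perm X) y ∈ orbIn M (((h⁻¹ : G) : Perm X) x) := by
      rw [← image_orbIn]
      exact ⟨y, hy, rfl⟩
    simp only [coe_mul, Perm.mul_apply, hgt hy']

theorem orbIn_locallyIn (x : X) : orbIn (locallyIn M) x = orbIn M x := by
  refine subset_antisymm ?_ fun y ⟨t, ht, h⟩ => ⟨t, le_locallyIn ht, h⟩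
  rintro y ⟨g, hg, rfl⟩
  obtain ⟨t, ht, hgt⟩ := hg x
  rw [hgt (mem_orbIn_self M x)]
  exact ⟨t, ht, rfl⟩

theorem locallyIn_le_ker_rho [M.Normal] : locallyIn M ≤ (rho M).ker := by
  intro g hg
  rw [mem_ker_rho_iff]
  intro x
  rw [← orbIn_locallyIn]
  exact ⟨g, hg, rfl⟩

theorem pow_eq_one_of_mem_locallyIn {q : ℕ} (hM : ∀ m ∈ M, m ^ q = 1) {g : G}
    (hg : g ∈ locallyIn M) : g ^ q = 1 := by
  refine Subtype.ext (Perm.ext fun x => ?_)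
  obtain ⟨t, ht, hgt⟩ := hg x
  have := hgt.perm_pow (fun y hy => apply_mem_orbIn hy ht) q (mem_orbIn_self M x)
  rw [← coe_pow, ← coe_pow, hM t ht] at this
  exact this

theorem card_locallyIn [Finite X] {q : ℕ} [Fact q.Prime] (hM : ∀ m ∈ M, m ^ q = 1) :
    ∃ k, Nat.card (locallyIn M) = q ^ k :=
  IsPGroup.iff_card.mp fun g => ⟨1, Subtype.ext (by
    rw [pow_one, SubgroupClass.coe_pow]
    exact pow_eq_one_of_mem_locallyIn hM g.2)⟩

end Layers

section ElemAbelian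

variable {X : Type u} {G : Subgroup (Perm X)}

structure IsElemAbelianOrbits (M : Subgroup G) (q : ℕ) : Prop where
  pow_eq_one : ∀ m ∈ M, m ^ q = 1
  comm : ∀ a ∈ M, ∀ b ∈ M, a * b = b * a
  card_orbIn : ∀ x : X, Nat.card (orbIn M x) = q

namespace IsElemAbelianOrbits

variable {M : Subgroup G} {q : ℕ}

theorem coe_pow_eq_one (hM : IsElemAbelianOrbits M q) {m : G} (hm : m ∈ M) :
    (m : Perm X) ^ q = 1 := by
  rw [← coe_pow, hM.pow_eq_one m hm, coe_one]

variable [Fact q.Prime]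

theorem exists_apply_ne (hM : IsElemAbelianOrbits M q) (x : X) :
    ∃ m ∈ M, (m : Perm X) x ≠ x := by
  by_contra! h
  have hx : orbIn M x = {x} :=
    Set.eq_singleton_iff_unique_mem.mpr
      ⟨mem_orbIn_self M x, fun _ ⟨t, ht, e⟩ => e ▸ h t ht⟩
  have := hM.card_orbIn x
  rw [hx, Nat.card_unique] at this
  exact (Fact.out : q.Prime).one_lt.ne this

theorem range_orbitCoord [Finite X] (hM : IsElemAbelianOrbits M q) {m : G} (hm : m ∈ M)
    {x : X} (hmx : (m : Perm X) x ≠ x) :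
    Set.range (orbitCoord q (m : Perm X) x) = orbIn M x := by
  refine Set.eq_of_subset_of_ncard_le ?_ ?_ (Set.toFinite _)
  · rintro _ ⟨j, rfl⟩
    exact ⟨m ^ j.toAdd.val, pow_mem hm _, rfl⟩
  · rw [← Nat.card_coe_set_eq, hM.card_orbIn, ← Nat.card_coe_set_eq,
      Nat.card_range_of_injective (orbitCoord_injective (hM.coe_pow_eq_one hm) hmx),
      Nat.card_congr Multiplicative.toAdd, Nat.card_zmod]

theorem exists_apply_orbitCoord [Finite X] (hM : IsElemAbelianOrbits M q) {m t : G} (hm : m ∈ M)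
    (ht : t ∈ M) {x : X} (hmx : (m : Perm X) x ≠ x) :
    ∃ a, ∀ j, (t : Perm X) (orbitCoord q m x j) = orbitCoord q m x (a * j) := by
  obtain ⟨a, ha⟩ : (t : Perm X) x ∈ Set.range (orbitCoord q (m : Perm X) x) := by
    rw [hM.range_orbitCoord hm hmx]
    exact ⟨t, ht, rfl⟩
  refine ⟨a, fun j => ?_⟩
  rw [mul_comm a j, orbitCoord_mul (hM.coe_pow_eq_one hm), ha]
  change ((t * m ^ j.toAdd.val : G) : Perm X) x = ((m ^ j.toAdd.val * t : G) : Perm X) x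
  rw [hM.comm t ht _ (pow_mem hm _)]

section OrbitHom

variable [Finite X] [M.Normal] (hM : IsElemAbelianOrbits M q) {m : G} (hm : m ∈ M) {x : X}
  (hmx : (m : Perm X) x ≠ x)

noncomputable def orbitHom : (rho M).ker →* Perm (Multiplicative (ZMod q)) :=
  transportHom (G.subtype.comp (rho M).ker.subtype) (orbitCoord q (m : Perm X) x)
    (orbitCoord_injective (hM.coe_pow_eq_one hm) hmx) fun k j => by
      rw [hM.range_orbitCoord hm hmx]
      exact apply_mem_orbIn_of_mem_ker M k.2 ((hM.range_orbitCoord hm hmx).le ⟨j, rfl⟩)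

theorem orbitCoord_orbitHom (g : (rho M).ker) (j : Multiplicative (ZMod q)) :
    orbitCoord q (m : Perm X) x (hM.orbitHom hm hmx g j)
      = ((g : G) : Perm X) (orbitCoord q (m : Perm X) x j) :=
  apply_transportHom _ _ _ _ g j

theorem orbitHom_mul (g : (rho M).ker) (n : Multiplicative (ZMod q)) :
    ∃ n', ∀ y, hM.orbitHom hm hmx g (n * y) = n' * hM.orbitHom hm hmx g y := by
  have ht : (g : G) * m ^ n.toAdd.val * (g : G)⁻¹ ∈ M :=
    (inferInstance : M.Normal).conj_mem _ (pow_mem hm _) _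
  obtain ⟨n', hn'⟩ := hM.exists_apply_orbitCoord hm ht hmx
  refine ⟨n', fun y => orbitCoord_injective (hM.coe_pow_eq_one hm) hmx ?_⟩
  rw [orbitCoord_orbitHom, ← hn', orbitCoord_orbitHom, orbitCoord_mul (hM.coe_pow_eq_one hm)]
  simp

theorem exists_orbitHom_eq_mul_iff (g : (rho M).ker) :
    (∃ a, ∀ y, hM.orbitHom hm hmx g y = a * y) ↔
      ∃ t ∈ M, Set.EqOn ((g : G) : Perm X) (t : Perm X) (orbIn M x) := by
  have he := orbitCoord_injective (hM.coe_pow_eq_one hm) hmx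
  rw [← hM.range_orbitCoord hm hmx]
  constructor
  · rintro ⟨a, ha⟩
    refine ⟨m ^ a.toAdd.val, pow_mem hm _, ?_⟩
    rintro _ ⟨j, rfl⟩
    rw [← hM.orbitCoord_orbitHom hm hmx g, ha, orbitCoord_mul (hM.coe_pow_eq_one hm)]
    rfl
  · rintro ⟨t, ht, hgt⟩
    obtain ⟨a, ha⟩ := hM.exists_apply_orbitCoord hm ht hmx
    exact ⟨a, fun j => he (by rw [orbitCoord_orbitHom, hgt ⟨j, rfl⟩, ha])⟩

end OrbitHom

theorem exists_holEmbedding [Finite X] [M.Normal] (hM : IsElemAbelianOrbits M q) :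
    ∃ Φ : (rho M).ker →* (Blk M → Hol q), Function.Injective Φ ∧
      ∀ g : (rho M).ker, (g : G) ∈ locallyIn M ↔ ∀ b, (Φ g b).right = 1 := by
  choose m hm hmx using fun b : Blk M => hM.exists_apply_ne b.out
  let Φ : (rho M).ker →* (Blk M → Hol q) :=
    MonoidHom.pi fun b => liftHol (hM.orbitHom (hm b) (hmx b)) (hM.orbitHom_mul (hm b) (hmx b))
  have hΦ g b : holAct _ (Φ g b) = hM.orbitHom (hm b) (hmx b) g :=
    holAct_liftHol _ (hM.orbitHom_mul (hm b) (hmx b)) g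
  have horb x : orbIn M x = orbIn M (blk M x).out := by rw [orbIn_out, orbIn_eq_fiber]
  refine ⟨Φ, (injective_iff_map_eq_one Φ).mpr fun g hg => ?_, fun g => ?_⟩
  · refine Subtype.ext (Subtype.ext (Perm.ext fun x => ?_))
    obtain ⟨j, hj⟩ : x ∈ Set.range (orbitCoord q (m (blk M x) : Perm X) (blk M x).out) := by
      rw [hM.range_orbitCoord (hm _) (hmx _), ← horb]
      exact mem_orbIn_self M x
    have h1 : hM.orbitHom (hm (blk M x)) (hmx (blk M x)) g = 1 := by
      rw [← hΦ, hg, Pi.one_apply, map_one]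
    rw [← hj, ← hM.orbitCoord_orbitHom (hm _) (hmx _), h1]
    rfl
  · rw [mem_locallyIn_iff, (blk_surjective M).forall]
    simp only [right_eq_one_iff, hΦ, hM.exists_orbitHom_eq_mul_iff, ← horb]

theorem isLayer [Finite X] [Nonempty X] [M.Normal] (hM : IsElemAbelianOrbits M q) :
    IsLayer q (Nat.card (Blk M)) ⊥ (locallyIn M) (rho M).ker := by
  obtain ⟨Φ, hΦ, hloc⟩ := hM.exists_holEmbedding
  obtain ⟨x⟩ := ‹Nonempty X›
  have horb : (fun x => orbIn (rho M).ker x) = fun x => orbIn M x := funext (orbIn_ker_rho M)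
  let e := MulEquiv.arrowCongr (Finite.equivFin (Blk M)) (MulEquiv.refl (Hol q))
  refine ⟨⟨e.toMonoidHom.comp Φ, ?_⟩, ?_, ?_, ?_, ?_, ?_, ?_⟩
  · rw [MonoidHom.ker_comp_of_injective _ _ (MulEquiv.injective _), bot_subgroupOf,
      (MonoidHom.ker_eq_bot_iff Φ).mpr hΦ]
  · rw [relIndex_bot_left, ← hM.card_orbIn x]
    exact (card_orbIn_dvd_card M x).trans (card_dvd_of_le (le_ker_rho M))
  · rw [relIndex_bot_left]
    exact card_locallyIn hM.pow_eq_one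
  · refine not_dvd_index_of_ker_eq ((SemidirectProduct.rightHom.compLeft (Blk M)).comp Φ) ?_
    ext g
    simp [funext_iff, mem_subgroupOf, hloc]
  · intro g
    simp only [mem_ker_rho_iff_image, orbIn_locallyIn]
  · intro g x
    simp only [orbIn_ker_rho]
    exact ⟨_, image_orbIn M g x⟩
  · rw [horb]
    exact card_range_orbIn M

end IsElemAbelianOrbits

end ElemAbelian

section Series

variable {X : Type u}

def HasLayeredSeries {n : ℕ} (p : Fin n → ℕ) (G : Subgroup (Perm X)) : Prop :=
  ∃ (τ : Perm (Fin n)) (K : Fin (n + 1) → Subgroup G) (T : Fin n → Subgroup G),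
    K 0 = ⊥ ∧ K (Fin.last n) = ⊤ ∧ (∀ i, (K i).Normal) ∧ (∀ i, (T i).Normal) ∧
    (∀ i : Fin n, K i.castSucc ≤ T i ∧ T i ≤ K i.succ) ∧
    ∀ i : Fin n, IsLayer (p (τ i)) (∏ j ∈ Finset.univ.filter (fun j => i < j), p (τ j))
      (K i.castSucc) (T i) (K i.succ)

theorem hasLayeredSeries_zero (p : Fin 0 → ℕ) (G : Subgroup (Perm X)) (hX : Nat.card X = 1) :
    HasLayeredSeries p G := by
  have : Subsingleton X := (Nat.card_eq_one_iff_unique.mp hX).1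
  exact ⟨1, fun _ => ⊥, Fin.elim0, rfl, Subsingleton.elim _ _, fun _ => inferInstance,
    fun i => i.elim0, fun i => i.elim0, fun i => i.elim0⟩

theorem HasLayeredSeries.of_rho {n : ℕ} {p : Fin (n + 1) → ℕ} {G : Subgroup (Perm X)}
    {M : Subgroup G} [M.Normal]
    {T₁ : Subgroup G} [T₁.Normal] (hT₁ : T₁ ≤ (rho M).ker) {j : Fin (n + 1)}
    (hlayer : IsLayer (p j) (Nat.card (Blk M)) ⊥ T₁ (rho M).ker)
    (hcard : Nat.card (Blk M) = ∏ k : Fin n, p (swap 0 j k.succ))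
    (h : HasLayeredSeries (fun k : Fin n => p (swap 0 j k.succ)) (rho M).range) :
    HasLayeredSeries p G := by
  obtain ⟨τ, K, T, hK0, hKlast, hKn, hTn, hKT, hlayers⟩ := h
  have hker : (⊥ : Subgroup (rho M).range).comap (rho M).rangeRestrict = (rho M).ker :=
    MonoidHom.ker_rangeRestrict _
  refine ⟨Perm.decomposeFin.symm (j, τ), Fin.cons ⊥ fun i => (K i).comap (rho M).rangeRestrict,
    Fin.cons T₁ fun i => (T i).comap (rho M).rangeRestrict, rfl, ?_, ?_, ?_, ?_, ?_⟩
  · rw [← Fin.succ_last, Fin.cons_succ, hKlast, comap_top]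
  · refine Fin.cases (by rw [Fin.cons_zero]; infer_instance) fun i => ?_
    rw [Fin.cons_succ]
    exact (hKn i).comap _
  · refine Fin.cases (by rwa [Fin.cons_zero]) fun i => ?_
    rw [Fin.cons_succ]
    exact (hTn i).comap _
  · refine Fin.cases ?_ fun i => ?_
    · rw [Fin.castSucc_zero, Fin.cons_zero, Fin.cons_zero, Fin.cons_succ, hK0, hker]
      exact ⟨bot_le, hT₁⟩
    · rw [← Fin.succ_castSucc, Fin.cons_succ, Fin.cons_succ, Fin.cons_succ]
      exact ⟨comap_mono (hKT i).1, comap_mono (hKT i).2⟩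
  · refine Fin.cases ?_ fun i => ?_
    · rw [Fin.castSucc_zero, Fin.cons_zero, Fin.cons_zero, Fin.cons_succ, hK0, hker,
        Perm.decomposeFin_symm_apply_zero, prod_filter_zero_lt]
      simp only [Perm.decomposeFin_symm_apply_succ]
      rwa [Equiv.prod_comp τ (fun k : Fin n => p (swap 0 j k.succ)), ← hcard]
    · rw [← Fin.succ_castSucc, Fin.cons_succ, Fin.cons_succ, Fin.cons_succ,
        Perm.decomposeFin_symm_apply_succ, prod_filter_succ_lt]
      simp only [Perm.decomposeFin_symm_apply_succ]
      exact (hlayers i).comap M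

theorem hasLayeredSeries_succ {n : ℕ} (p : Fin (n + 1) → ℕ) (hp : ∀ i, (p i).Prime)
    (hinj : Function.Injective p) (G : Subgroup (Perm X)) [Group.IsSolvable G]
    (htrans : ∀ x y : X, ∃ g ∈ G, g x = y) (hcard : Nat.card X = ∏ i, p i)
    (ih : ∀ {Y : Type u} (p' : Fin n → ℕ), (∀ i, (p' i).Prime) → Function.Injective p' →
      ∀ H : Subgroup (Perm Y), Group.IsSolvable H → (∀ x y : Y, ∃ g ∈ H, g x = y) →
      Nat.card Y = ∏ i, p' i → HasLayeredSeries p' H) :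
    HasLayeredSeries p G := by
  have hX : 1 < Nat.card X :=
    hcard ▸ (hp 0).one_lt.trans_le (Finset.single_le_prod' (fun i _ => (hp i).one_le)
      (Finset.mem_univ 0))
  have : Finite X := Nat.finite_of_card_ne_zero (by omega)
  have : Nontrivial X := Finite.one_lt_card_iff_nontrivial.mp hX
  have : Nontrivial G := by
    obtain ⟨x, y, hxy⟩ := exists_pair_ne X
    obtain ⟨g, hg, rfl⟩ := htrans x y
    refine ⟨⟨⟨g, hg⟩, 1, fun h => hxy ?_⟩⟩
    rw [show g = 1 from congrArg Subtype.val h]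
    rfl
  obtain ⟨q, hq, M, hMn, hM, hcomm, hpow⟩ := exists_normal_elemAbelian G
  have := Fact.mk hq
  have horb := card_orbIn_eq_prime hpow hM htrans fun h =>
    hq.one_lt.ne' (Nat.isUnit_iff.mp (squarefree_prod_primes hp hinj q (hcard ▸ sq q ▸ h)))
  have hXM := card_eq_card_blk_mul M horb
  obtain ⟨j, rfl⟩ := exists_eq_of_prime_dvd_prod hp hq (hcard ▸ hXM ▸ dvd_mul_left _ _)
  have hcardB : Nat.card (Blk M) = ∏ k : Fin n, p (swap 0 j k.succ) := by
    rw [hcard, prod_eq_mul_prod_swap_succ p j, mul_comm] at hXM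
    exact (Nat.eq_of_mul_eq_mul_right (hp j).pos hXM).symm
  refine HasLayeredSeries.of_rho locallyIn_le_ker_rho
    (IsElemAbelianOrbits.isLayer ⟨hpow, hcomm, horb⟩) hcardB ?_
  exact ih _ (fun _ => hp _) (hinj.comp ((swap 0 j).injective.comp (Fin.succ_injective n))) _
    (Group.isSolvable_of_surjective (rho M).rangeRestrict_surjective)
    (exists_mem_range_rho_apply_eq M htrans) hcardB

theorem hasLayeredSeries {n : ℕ} (p : Fin n → ℕ) (hp : ∀ i, (p i).Prime)
    (hinj : Function.Injective p) (G : Subgroup (Perm X)) (hsolv : Group.IsSolvable G)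
    (htrans : ∀ x y : X, ∃ g ∈ G, g x = y) (hcard : Nat.card X = ∏ i, p i) :
    HasLayeredSeries p G := by
  induction n generalizing X with
  | zero => exact hasLayeredSeries_zero p G (by simpa using hcard)
  | succ n ih => exact hasLayeredSeries_succ p hp hinj G htrans hcard ih

end Series

end SquarefreeDegree

/-- Structure of solvable transitive permutation groups of square-free degree:
there is a permutation `τ` of the primes and a chain of normal subgroups
`1 = K₀ ⊆ T₁ ⊆ K₁ ⊆ ⋯ ⊆ Tₙ ⊆ Kₙ = G` with the stated properties. -/
theorem statement6 {n : ℕ} {X : Type u} (p : Fin n → ℕ)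
    (hp : ∀ i, Nat.Prime (p i)) (hinj : Function.Injective p)
    (G : Subgroup (Equiv.Perm X)) (hsolv : IsSolvable ↥G)
    (htrans : ∀ x y : X, ∃ g ∈ G, g x = y)
    (hcard : Nat.card X = Finset.univ.prod p) :
    ∃ (τ : Equiv.Perm (Fin n)) (K : Fin (n + 1) → Subgroup ↥G) (T : Fin n → Subgroup ↥G),
      K 0 = ⊥ ∧ K (Fin.last n) = ⊤ ∧
      (∀ i, (K i).Normal) ∧ (∀ i, (T i).Normal) ∧
      (∀ i : Fin n, K i.castSucc ≤ T i ∧ T i ≤ K i.succ) ∧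
      ∀ i : Fin n,
        (∃ φ : ↥(K i.succ) →*
            (Fin (Finset.prod (Finset.filter (fun j => i < j) Finset.univ)
                (fun j => p (τ j))) → Hol (p (τ i))),
          φ.ker = (K i.castSucc).subgroupOf (K i.succ)) ∧
        (p (τ i) ∣ (K i.castSucc).relIndex (K i.succ)) ∧
        (∃ k : ℕ, (K i.castSucc).relIndex (T i) = p (τ i) ^ k) ∧
        (¬ p (τ i) ∣ (T i).relIndex (K i.succ)) ∧
        (∀ g : ↥G, g ∈ K i.succ ↔
          ∀ x : X, ⇑(g : Equiv.Perm X) '' orbIn (T i) x = orbIn (T i) x) ∧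
        (∀ g : ↥G, ∀ x : X, ∃ x' : X,
          ⇑(g : Equiv.Perm X) '' orbIn (K i.succ) x = orbIn (K i.succ) x') ∧
        Nat.card ↥(Set.range fun x : X => orbIn (K i.succ) x) =
          Finset.prod (Finset.filter (fun j => i < j) Finset.univ) (fun j => p (τ j)) :=
  SquarefreeDegree.hasLayeredSeries p hp hinj G hsolv htrans hcard
end

section
/- Let p_1, …, p_n be n distinct prime numbers and let G be a solvable transitive subgroup of Sym(X), where |X| = p_1⋯p_n. Let {1} = K_0 ⊆ T_1 ⊆ K_1 ⊆ … ⊆ T_n ⊆ K_n = G be normal subgroups of G satisfying, for every i = 1, …, n: p_i divides |K_i/K_{i−1}|, T_i/K_{i−1} is the Sylow p_i-subgroup of K_i/K_{i−1}, and K_i = {g ∈ G : g(T_i(x)) = T_i(x) for all x ∈ X}. Let P_i be a Sylow p_i-subgroup of G. Then for all x ∈ X and all i ≥ 1: K_i(x) = K_i(T_i(x)) = T_i(x), and T_i = (T_i ∩ P_i)K_{i−1} (as a set product of subgroups). -/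
open Equiv Pointwise

universe u v

/-! Every element of `K_i` maps each `T_i`-orbit onto itself and `T_i ≤ K_i`, so the
`K_i`-orbits are the `T_i`-orbits. For the factorisation, `T_i/K_{i-1}` is a normal `p_i`-subgroup
of `G/K_{i-1}`, hence lies in the image of every Sylow `p_i`-subgroup `P_i`; thus
`T_i ≤ P_i K_{i-1}`, and Dedekind's modular law gives `T_i = (T_i ∩ P_i) K_{i-1}`. -/

section Orbits

variable {X : Type u} {G : Subgroup (Equiv.Perm X)} {H K : Subgroup ↥G}

theorem orbIn_eq_setOf_exists_orbIn (hHK : H ≤ K) (x : X) :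
    orbIn K x = {y : X | ∃ t : ↥G, t ∈ K ∧ ∃ z ∈ orbIn H x, (t : Equiv.Perm X) z = y} := by
  ext y
  constructor
  · rintro ⟨t, ht, rfl⟩
    exact ⟨t, ht, x, ⟨1, one_mem H, rfl⟩, rfl⟩
  · rintro ⟨t, ht, _, ⟨s, hs, rfl⟩, rfl⟩
    exact ⟨t * s, mul_mem ht (hHK hs), rfl⟩

theorem orbIn_eq_of_mapsTo (hHK : H ≤ K) {x : X}
    (hK : ∀ g ∈ K, Set.MapsTo (g : Equiv.Perm X) (orbIn H x) (orbIn H x)) :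
    orbIn K x = orbIn H x := by
  refine Set.Subset.antisymm ?_ ?_
  · rintro y ⟨g, hg, rfl⟩
    exact hK g hg ⟨1, one_mem H, rfl⟩
  · rintro y ⟨s, hs, rfl⟩
    exact ⟨s, hHK hs, rfl⟩

end Orbits

section Sylow

open QuotientGroup

variable {G : Type*} [Group G] {N T : Subgroup G}

theorem card_map_mk'_eq_relIndex [N.Normal] (hNT : N ≤ T) :
    Nat.card (T.map (mk' N)) = N.relIndex T := by
  rw [← Subgroup.relIndex_bot_left, ← map_mk'_self N, Subgroup.relIndex_map_map, ker_mk',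
    sup_idem, sup_of_le_left hNT]

theorem Sylow.le_sup_of_relIndex_eq_pow [Finite G] {p k : ℕ} [Fact p.Prime] [N.Normal]
    [T.Normal] (hNT : N ≤ T) (hk : N.relIndex T = p ^ k) (P : Sylow p G) :
    T ≤ (P : Subgroup G) ⊔ N := by
  have hpT : IsPGroup p (T.map (mk' N)) :=
    IsPGroup.of_card ((card_map_mk'_eq_relIndex hNT).trans hk)
  have : (T.map (mk' N)).Normal := Subgroup.Normal.map inferInstance _ (mk'_surjective N)
  have hle := hpT.le_sylow_of_normal (P.mapSurjective (mk'_surjective N))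
  rwa [Sylow.coe_mapSurjective, Subgroup.map_le_iff_le_comap, Subgroup.comap_map_eq,
    ker_mk'] at hle

end Sylow

theorem statement7_general {n : ℕ} {X : Type u} (p : Fin n → ℕ)
    (hp : ∀ i, Nat.Prime (p i))
    (G : Subgroup (Equiv.Perm X))
    (hcard : Nat.card X = Finset.univ.prod p)
    (K : Fin (n + 1) → Subgroup ↥G) (T : Fin n → Subgroup ↥G)
    (hKnorm : ∀ i, (K i).Normal) (hTnorm : ∀ i, (T i).Normal)
    (hchain : ∀ i : Fin n, K i.castSucc ≤ T i ∧ T i ≤ K i.succ)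
    (hTsyl : ∀ i : Fin n, (∃ k : ℕ, (K i.castSucc).relIndex (T i) = p i ^ k) ∧
      ¬ p i ∣ (T i).relIndex (K i.succ))
    (hKdef : ∀ i : Fin n, ∀ g : ↥G, g ∈ K i.succ ↔
      ∀ x : X, ⇑(g : Equiv.Perm X) '' orbIn (T i) x = orbIn (T i) x)
    (P : (i : Fin n) → Sylow (p i) ↥G) :
    ∀ (i : Fin n) (x : X),
      orbIn (K i.succ) x =
        {y : X | ∃ t : ↥G, t ∈ K i.succ ∧ ∃ z ∈ orbIn (T i) x, (t : Equiv.Perm X) z = y} ∧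
      orbIn (K i.succ) x = orbIn (T i) x ∧
      (T i : Set ↥G) =
        ((T i : Set ↥G) ∩ ((P i : Subgroup ↥G) : Set ↥G)) * (K i.castSucc : Set ↥G) := by
  intro i x
  have : Finite X := Nat.finite_of_card_ne_zero <| by
    rw [hcard]; exact Finset.prod_ne_zero_iff.2 fun j _ => (hp j).ne_zero
  have : Fact (p i).Prime := ⟨hp i⟩
  have := hKnorm i.castSucc
  have := hTnorm i
  obtain ⟨hKT, hTK⟩ := hchain i
  obtain ⟨k, hk⟩ := (hTsyl i).1
  refine ⟨orbIn_eq_setOf_exists_orbIn hTK x,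
    orbIn_eq_of_mapsTo hTK fun g hg =>
      Set.mapsTo_iff_image_subset.2 ((hKdef i g).1 hg x).subset, ?_⟩
  rw [← Subgroup.coe_inf, Subgroup.inf_mul_assoc _ _ _ hKT, ← Subgroup.mul_normal,
    Set.inter_eq_left.2 ((P i).le_sup_of_relIndex_eq_pow hKT hk)]

/-- For a chain of normal subgroups as in the structure theorem for solvable
transitive groups of square-free degree: `K_i(x) = K_i(T_i(x)) = T_i(x)` and
`T_i = (T_i ∩ P_i)K_{i-1}` for any Sylow `p_i`-subgroup `P_i` of `G`. -/
theorem statement7 {n : ℕ} {X : Type u} (p : Fin n → ℕ)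
    (hp : ∀ i, Nat.Prime (p i)) (hinj : Function.Injective p)
    (G : Subgroup (Equiv.Perm X)) (hsolv : IsSolvable ↥G)
    (htrans : ∀ x y : X, ∃ g ∈ G, g x = y)
    (hcard : Nat.card X = Finset.univ.prod p)
    (K : Fin (n + 1) → Subgroup ↥G) (T : Fin n → Subgroup ↥G)
    (hK0 : K 0 = ⊥) (hKn : K (Fin.last n) = ⊤)
    (hKnorm : ∀ i, (K i).Normal) (hTnorm : ∀ i, (T i).Normal)
    (hchain : ∀ i : Fin n, K i.castSucc ≤ T i ∧ T i ≤ K i.succ)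
    (hdvd : ∀ i : Fin n, p i ∣ (K i.castSucc).relIndex (K i.succ))
    (hTsyl : ∀ i : Fin n, (∃ k : ℕ, (K i.castSucc).relIndex (T i) = p i ^ k) ∧
      ¬ p i ∣ (T i).relIndex (K i.succ))
    (hKdef : ∀ i : Fin n, ∀ g : ↥G, g ∈ K i.succ ↔
      ∀ x : X, ⇑(g : Equiv.Perm X) '' orbIn (T i) x = orbIn (T i) x)
    (P : (i : Fin n) → Sylow (p i) ↥G) :
    ∀ (i : Fin n) (x : X),
      orbIn (K i.succ) x =
        {y : X | ∃ t : ↥G, t ∈ K i.succ ∧ ∃ z ∈ orbIn (T i) x, (t : Equiv.Perm X) z = y} ∧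
      orbIn (K i.succ) x = orbIn (T i) x ∧
      (T i : Set ↥G) =
        ((T i : Set ↥G) ∩ ((P i : Subgroup ↥G) : Set ↥G)) * (K i.castSucc : Set ↥G) :=
  statement7_general p hp G hcard K T hKnorm hTnorm hchain hTsyl hKdef P
end
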